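/- arXiv:1512.03543 — 9 statements merged into one kernel-verified Lean document; each statement's English description precedes it below -/
import Mathlib

section
/- For every δ ∈ (0,1] with 1/δ ∈ ℤ and every μ ∈ Δ_M, the set S_δ(μ) is nonempty and μ lies in the convex hull of S_δ(μ); that is, every point of the simplex is a convex combination of δ-grid points of the simplex lying at ℓ∞-distance at most δ from it. -/
/-!
Write `μ = δ • (k + f)` with `k = ⌊μ / δ⌋` and `f = fract (μ / δ)`. Since `1 / δ` is an integer,
`∑ f` is an integer `r`, so `f` lies in the hypersimplex `{x ∈ [0, 1]^M | ∑ x = r}`. At an extreme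
point of the hypersimplex no coordinate is fractional: integrality of the sum forces a second
fractional coordinate, and shifting mass between the two stays inside. By Krein–Milman `f` is
therefore a convex combination of `0`/`1` vectors of sum `r`, and `v ↦ δ • (k + v)` sends these to
grid points of the simplex within `δ` of `μ`.
-/

open Set

section

variable {𝕜 E : Type*} [Field 𝕜] [LinearOrder 𝕜] [IsStrictOrderedRing 𝕜] [AddCommGroup E]
  [Module 𝕜 E]

theorem eq_zero_of_add_mem_of_sub_mem_of_mem_extremePoints {A : Set E} {x v : E}
    (hx : x ∈ A.extremePoints 𝕜) (hadd : x + v ∈ A) (hsub : x - v ∈ A) : v = 0 := by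
  have := (mem_extremePoints.1 hx).2 _ hadd _ hsub (mem_openSegment_add_sub x v)
  simpa using this.1

end

def hypersimplex (ι : Type*) [Fintype ι] (r : ℤ) : Set (ι → ℝ) :=
  Icc 0 1 ∩ {x | ∑ i, x i = r}

namespace hypersimplex

variable {ι : Type*} [Fintype ι] {r : ℤ} {x : ι → ℝ}

theorem convex (ι : Type*) [Fintype ι] (r : ℤ) : Convex ℝ (hypersimplex ι r) :=
  (convex_Icc 0 1).inter <| convex_hyperplane
    ⟨fun _ _ => Finset.sum_add_distrib, fun _ _ => (Finset.mul_sum ..).symm⟩ _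

theorem isCompact (ι : Type*) [Fintype ι] (r : ℤ) : IsCompact (hypersimplex ι r) :=
  isCompact_Icc.inter_right (isClosed_eq (by fun_prop) continuous_const)

theorem exists_ne_mem_Ioo (hx : x ∈ hypersimplex ι r) {i : ι} (hi : x i ∈ Ioo 0 1) :
    ∃ j ≠ i, x j ∈ Ioo 0 1 := by
  classical
  by_contra! h
  have hint : ∀ j ∈ Finset.univ.erase i, x j = ⌊x j⌋ := by
    intro j hj
    have hj01 : x j ∈ Icc (0 : ℝ) 1 \ Ioo 0 1 :=
      ⟨⟨hx.1.1 j, hx.1.2 j⟩, h j (Finset.ne_of_mem_erase hj)⟩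
    rw [Icc_sdiff_Ioo_same zero_le_one] at hj01
    obtain hzero | hone : x j = 0 ∨ x j = 1 := hj01
    · simp [hzero]
    · simp [hone]
  have hsum := Finset.add_sum_erase Finset.univ x (Finset.mem_univ i)
  rw [Finset.sum_congr rfl hint, hx.2] at hsum
  have h0 : (0 : ℝ) < (r - ∑ j ∈ Finset.univ.erase i, ⌊x j⌋ : ℤ) := by push_cast; linarith [hi.1]
  have h1 : ((r - ∑ j ∈ Finset.univ.erase i, ⌊x j⌋ : ℤ) : ℝ) < 1 := by push_cast; linarith [hi.2]
  norm_cast at h0 h1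
  omega

theorem add_smul_single_sub_single_mem [DecidableEq ι] (hx : x ∈ hypersimplex ι r) {i j : ι}
    (hij : i ≠ j) {t : ℝ} (hi : x i + t ∈ Icc 0 1) (hj : x j - t ∈ Icc 0 1) :
    x + t • (Pi.single i 1 - Pi.single j 1) ∈ hypersimplex ι r := by
  refine ⟨⟨fun k => ?_, fun k => ?_⟩, ?_⟩
  · rcases eq_or_ne k i with rfl | hki
    · simpa [hij] using hi.1
    rcases eq_or_ne k j with rfl | hkj
    · simpa [hij, sub_eq_add_neg] using hj.1
    · simpa [hki, hkj] using hx.1.1 k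
  · rcases eq_or_ne k i with rfl | hki
    · simpa [hij] using hi.2
    rcases eq_or_ne k j with rfl | hkj
    · simpa [hij, sub_eq_add_neg] using hj.2
    · simpa [hki, hkj] using hx.1.2 k
  · simpa [Finset.sum_add_distrib, Finset.sum_sub_distrib, ← Finset.mul_sum] using hx.2

theorem mem_zero_one_of_mem_extremePoints (hx : x ∈ (hypersimplex ι r).extremePoints ℝ) (i : ι) :
    x i ∈ ({0, 1} : Set ℝ) := by
  classical
  by_contra hi
  have hxi : x i ∈ Ioo 0 1 := by
    by_contra h
    have hx01 : x i ∈ Icc (0 : ℝ) 1 \ Ioo 0 1 := ⟨⟨hx.1.1.1 i, hx.1.1.2 i⟩, h⟩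
    rw [Icc_sdiff_Ioo_same zero_le_one] at hx01
    exact hi hx01
  obtain ⟨j, hji, hxj⟩ := exists_ne_mem_Ioo (extremePoints_subset hx) hxi
  set ε := min (min (x i) (1 - x i)) (min (x j) (1 - x j))
  have hε : 0 < ε := by simp only [ε, lt_min_iff, sub_pos]; exact ⟨⟨hxi.1, hxi.2⟩, hxj.1, hxj.2⟩
  have hεi : ε ≤ min (x i) (1 - x i) := min_le_left _ _
  have hεj : ε ≤ min (x j) (1 - x j) := min_le_right _ _
  rw [le_min_iff] at hεi hεj
  have hmem : ∀ t, |t| ≤ ε → x + t • (Pi.single i 1 - Pi.single j 1) ∈ hypersimplex ι r := by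
    intro t ht
    rw [abs_le] at ht
    refine add_smul_single_sub_single_mem (extremePoints_subset hx) hji.symm ⟨?_, ?_⟩ ⟨?_, ?_⟩ <;>
      linarith
  have h0 := eq_zero_of_add_mem_of_sub_mem_of_mem_extremePoints hx (hmem ε (abs_of_pos hε).le)
    (by simpa only [neg_smul, ← sub_eq_add_neg] using hmem (-ε) (by rw [abs_neg, abs_of_pos hε]))
  have := congrFun h0 i
  simp [hji.symm] at this
  exact hε.ne' this

theorem convexHull_inter_pi_zero_one (ι : Type*) [Fintype ι] (r : ℤ) :
    convexHull ℝ (hypersimplex ι r ∩ univ.pi fun _ => {0, 1}) = hypersimplex ι r := by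
  refine (convexHull_min inter_subset_left (convex ι r)).antisymm ?_
  have hfin : (hypersimplex ι r ∩ univ.pi fun _ => ({0, 1} : Set ℝ)).Finite :=
    (Finite.pi fun _ => toFinite _).subset inter_subset_right
  calc hypersimplex ι r
      = closure (convexHull ℝ ((hypersimplex ι r).extremePoints ℝ)) :=
        (closure_convexHull_extremePoints (isCompact ι r) (convex ι r)).symm
    _ ⊆ closure (convexHull ℝ (hypersimplex ι r ∩ univ.pi fun _ => {0, 1})) :=
        closure_mono <| convexHull_mono fun x (hx : x ∈ (hypersimplex ι r).extremePoints ℝ) =>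
          ⟨extremePoints_subset hx, mem_univ_pi.2 (mem_zero_one_of_mem_extremePoints hx)⟩
    _ = _ := (hfin.isClosed_convexHull ℝ).closure_eq

end hypersimplex

/-- The set `S_δ(μ)`. -/
def simplexGridNbhd {ι : Type*} [Fintype ι] (δ : ℝ) (μ : ι → ℝ) : Set (ι → ℝ) :=
  {μ' | μ' ∈ stdSimplex ℝ ι ∧ (∀ θ, ∃ z : ℤ, μ' θ = z * δ) ∧ ∀ θ, |μ θ - μ' θ| ≤ δ}

theorem fract_div_mem_hypersimplex {ι : Type*} [Fintype ι] {μ : ι → ℝ}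
    (hμ : μ ∈ stdSimplex ℝ ι) {δ : ℝ} {N : ℕ} (hδN : δ = 1 / N) :
    (fun i => Int.fract (μ i / δ)) ∈ hypersimplex ι (N - ∑ i, ⌊μ i / δ⌋) := by
  refine ⟨⟨fun i => Int.fract_nonneg _, fun i => (Int.fract_lt_one _).le⟩, ?_⟩
  have hsum : ∑ i, μ i / δ = N := by rw [← Finset.sum_div, hμ.2, hδN, one_div_one_div]
  change ∑ i, (μ i / δ - ⌊μ i / δ⌋) = ((N - ∑ i, ⌊μ i / δ⌋ : ℤ) : ℝ)
  rw [Finset.sum_sub_distrib, hsum]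
  push_cast
  rfl

theorem smul_floor_add_mem_simplexGridNbhd {ι : Type*} [Fintype ι] {δ : ℝ} (hδ : 0 < δ)
    {μ : ι → ℝ} (hμ : μ ∈ stdSimplex ℝ ι) {r : ℤ}
    (hfract : (fun i => Int.fract (μ i / δ)) ∈ hypersimplex ι r)
    {v : ι → ℝ} (hv : v ∈ hypersimplex ι r ∩ univ.pi fun _ => {0, 1}) :
    δ • ((fun i => (⌊μ i / δ⌋ : ℝ)) + v) ∈ simplexGridNbhd δ μ := by
  refine ⟨⟨fun i => ?_, ?_⟩, fun i => ?_, fun i => ?_⟩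
  · have hk : (0 : ℝ) ≤ ⌊μ i / δ⌋ := mod_cast Int.floor_nonneg.2 (div_nonneg (hμ.1 i) hδ.le)
    simpa using mul_nonneg hδ.le (add_nonneg hk (hv.1.1.1 i))
  · calc ∑ i, (δ • ((fun i => (⌊μ i / δ⌋ : ℝ)) + v)) i
          = δ * (∑ i, (⌊μ i / δ⌋ : ℝ) + ∑ i, v i) := by
            simp only [Pi.smul_apply, Pi.add_apply, smul_eq_mul, ← Finset.mul_sum,
              Finset.sum_add_distrib]
      _ = δ * (∑ i, (⌊μ i / δ⌋ : ℝ) + ∑ i, Int.fract (μ i / δ)) := by rw [hv.1.2, ← hfract.2]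
      _ = ∑ i, μ i := by
            simp only [← Finset.sum_add_distrib, Int.floor_add_fract, Finset.mul_sum,
              mul_div_cancel₀ _ hδ.ne']
      _ = 1 := hμ.2
  · rcases mem_univ_pi.1 hv.2 i with h | h
    · exact ⟨⌊μ i / δ⌋, by simp [h, mul_comm]⟩
    · exact ⟨⌊μ i / δ⌋ + 1, by rw [Pi.smul_apply, Pi.add_apply, h]; push_cast; ring⟩
  · have hdist : |Int.fract (μ i / δ) - v i| ≤ 1 :=
      abs_sub_le_of_nonneg_of_le (hfract.1.1 i) (hfract.1.2 i) (hv.1.1.1 i) (hv.1.1.2 i)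
    calc |μ i - (δ • ((fun i => (⌊μ i / δ⌋ : ℝ)) + v)) i| = δ * |Int.fract (μ i / δ) - v i| := by
          rw [← abs_of_pos hδ, ← abs_mul, abs_of_pos hδ, ← Int.self_sub_floor]
          congr 1
          simp only [Pi.smul_apply, Pi.add_apply, smul_eq_mul]
          field_simp
          ring
      _ ≤ δ := mul_le_of_le_one_right hδ.le hdist

theorem mem_convexHull_grid_general (M : ℕ)
    (δ : ℝ) (hδ0 : 0 < δ)
    (hint : ∃ N : ℕ, 0 < N ∧ δ = 1 / N)
    (μ : Fin M → ℝ) (hμ : μ ∈ stdSimplex ℝ (Fin M)) :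
    ({μ' | μ' ∈ stdSimplex ℝ (Fin M) ∧ (∀ θ, ∃ z : ℤ, μ' θ = z * δ) ∧
        ∀ θ, |μ θ - μ' θ| ≤ δ} : Set (Fin M → ℝ)).Nonempty ∧
    μ ∈ convexHull ℝ
      ({μ' | μ' ∈ stdSimplex ℝ (Fin M) ∧ (∀ θ, ∃ z : ℤ, μ' θ = z * δ) ∧
        ∀ θ, |μ θ - μ' θ| ≤ δ} : Set (Fin M → ℝ)) := by
  change (simplexGridNbhd δ μ).Nonempty ∧ μ ∈ convexHull ℝ (simplexGridNbhd δ μ)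
  obtain ⟨N, -, hδN⟩ := hint
  let k : Fin M → ℝ := fun θ => ⌊μ θ / δ⌋
  let f : Fin M → ℝ := fun θ => Int.fract (μ θ / δ)
  let L : (Fin M → ℝ) →ᵃ[ℝ] Fin M → ℝ := δ • (AffineMap.const ℝ _ k + AffineMap.id ℝ _)
  have hLf : L f = μ := funext fun θ => by
    change δ * ((⌊μ θ / δ⌋ : ℝ) + Int.fract (μ θ / δ)) = μ θ
    rw [Int.floor_add_fract, mul_div_cancel₀ _ hδ0.ne']
  have hf : f ∈ hypersimplex (Fin M) _ := fract_div_mem_hypersimplex hμ hδN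
  have hL : L '' (hypersimplex (Fin M) _ ∩ univ.pi fun _ => {0, 1}) ⊆ simplexGridNbhd δ μ :=
    image_subset_iff.2 fun v hv => smul_floor_add_mem_simplexGridNbhd hδ0 hμ hf hv
  have hhull : μ ∈ convexHull ℝ (simplexGridNbhd δ μ) := by
    refine convexHull_mono hL ?_
    rw [← L.image_convexHull, hypersimplex.convexHull_inter_pi_zero_one]
    exact ⟨f, hf, hLf⟩
  exact ⟨convexHull_nonempty_iff.1 ⟨μ, hhull⟩, hhull⟩

/-- For `δ ∈ (0,1]` with `1/δ ∈ ℤ` and `μ ∈ Δ_M`, the set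
`S_δ(μ) = {μ' ∈ Δ_M : all coordinates of μ' are integer multiples of δ and
‖μ - μ'‖_∞ ≤ δ}` is nonempty, and `μ` lies in its convex hull. -/
theorem mem_convexHull_grid (M : ℕ) (hM : 0 < M)
    (δ : ℝ) (hδ0 : 0 < δ) (hδ1 : δ ≤ 1)
    (hint : ∃ N : ℕ, 0 < N ∧ δ = 1 / N)
    (μ : Fin M → ℝ) (hμ : μ ∈ stdSimplex ℝ (Fin M)) :
    ({μ' | μ' ∈ stdSimplex ℝ (Fin M) ∧ (∀ θ, ∃ z : ℤ, μ' θ = z * δ) ∧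
        ∀ θ, |μ θ - μ' θ| ≤ δ} : Set (Fin M → ℝ)).Nonempty ∧
    μ ∈ convexHull ℝ
      ({μ' | μ' ∈ stdSimplex ℝ (Fin M) ∧ (∀ θ, ∃ z : ℤ, μ' θ = z * δ) ∧
        ∀ θ, |μ θ - μ' θ| ≤ δ} : Set (Fin M → ℝ)) :=
  mem_convexHull_grid_general M δ hδ0 hint μ hμ
end

section
/- Lemma (approximation by grid-supported signaling schemes): Let δ ∈ (0,1] with 1/δ ∈ ℤ, let λ ∈ Δ_M, and let α be a signaling scheme for λ of value v = Σ_μ α_μ val(μ). Then there exists a signaling scheme α' for λ supported on the grid S_δ whose value satisfies Σ_{μ' ∈ S_δ} α'_{μ'} val(μ') ≥ v − M·δ. -/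
/-!
Round a posterior `p` down to the grid, `q = δ⌊p/δ⌋`. The cell
`{y | q ≤ y ≤ q + δ, ∑ y = 1}` contains `p`, and its vertices are grid points of the simplex:
a vertex has at most one coordinate strictly inside its interval (otherwise mass can be shifted
between two such coordinates in both directions), and since `1` and `q` lie on the grid, the
constraint `∑ y = 1` puts that coordinate on the grid too. By Krein–Milman `p` is a convex
combination of these vertices, each within `δ` of `p` in every coordinate, so within `M δ` in
`ℓ¹`. Since `|A| ≤ 1` makes `val` 1-Lipschitz for `ℓ¹`, splitting every posterior of the scheme
this way keeps the prior and loses at most `M δ` of value.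
-/

open Finset

/-- The value of the Bayesian zero-sum game with payoff matrices `A θ` at
posterior `μ`: `val(μ) = max_{x ∈ Δ_r} min_{j ∈ [c]} (xᵀ A^μ)_j` where
`A^μ = ∑_θ μ_θ A^θ`. -/
noncomputable def gameVal (M r c : ℕ) (A : Fin M → Matrix (Fin r) (Fin c) ℝ)
    (μ : Fin M → ℝ) : ℝ :=
  sSup {t : ℝ | ∃ x ∈ stdSimplex ℝ (Fin r),
    t = ⨅ j : Fin c, ∑ i : Fin r, x i * ∑ θ : Fin M, μ θ * A θ i j}

theorem sum_mul_le_sum_mul_add {ι : Type*} [Fintype ι] {x : ι → ℝ} (hx : x ∈ stdSimplex ℝ ι)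
    {a b : ι → ℝ} {d : ℝ} (h : ∀ i, a i ≤ b i + d) :
    ∑ i, x i * a i ≤ ∑ i, x i * b i + d :=
  calc ∑ i, x i * a i ≤ ∑ i, x i * (b i + d) :=
        sum_le_sum fun i _ => mul_le_mul_of_nonneg_left (h i) (hx.1 i)
    _ = ∑ i, x i * b i + d := by simp only [mul_add, sum_add_distrib, ← sum_mul, hx.2, one_mul]

section GameValue

variable {M r c : ℕ} {A : Fin M → Matrix (Fin r) (Fin c) ℝ}

theorem sum_mul_le_sum_mul_add_sum_abs_sub (hA : ∀ θ i j, |A θ i j| ≤ 1) (μ ν : Fin M → ℝ)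
    (i : Fin r) (j : Fin c) :
    ∑ θ, μ θ * A θ i j ≤ ∑ θ, ν θ * A θ i j + ∑ θ, |μ θ - ν θ| := by
  rw [← sub_le_iff_le_add', ← sum_sub_distrib]
  refine sum_le_sum fun θ _ => ?_
  calc μ θ * A θ i j - ν θ * A θ i j = (μ θ - ν θ) * A θ i j := by ring
    _ ≤ |μ θ - ν θ| * |A θ i j| := (le_abs_self _).trans (abs_mul _ _).le
    _ ≤ |μ θ - ν θ| := mul_le_of_le_one_right (abs_nonneg _) (hA θ i j)

theorem gameVal_set_nonempty (hr : 0 < r) (A : Fin M → Matrix (Fin r) (Fin c) ℝ)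
    (μ : Fin M → ℝ) :
    {t : ℝ | ∃ x ∈ stdSimplex ℝ (Fin r),
      t = ⨅ j : Fin c, ∑ i : Fin r, x i * ∑ θ : Fin M, μ θ * A θ i j}.Nonempty :=
  ⟨_, _, single_mem_stdSimplex ℝ ⟨0, hr⟩, rfl⟩

theorem gameVal_set_bddAbove (hc : 0 < c) (hA : ∀ θ i j, |A θ i j| ≤ 1) (μ : Fin M → ℝ) :
    BddAbove {t : ℝ | ∃ x ∈ stdSimplex ℝ (Fin r),
      t = ⨅ j : Fin c, ∑ i : Fin r, x i * ∑ θ : Fin M, μ θ * A θ i j} := by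
  refine ⟨∑ θ, |μ θ|, ?_⟩
  rintro _ ⟨x, hx, rfl⟩
  calc (⨅ j : Fin c, ∑ i, x i * ∑ θ, μ θ * A θ i j)
      ≤ ∑ i, x i * ∑ θ, μ θ * A θ i ⟨0, hc⟩ := ciInf_le (Set.finite_range _).bddBelow _
    _ ≤ ∑ i, x i * ∑ θ, (0 : Fin M → ℝ) θ * A θ i ⟨0, hc⟩ + ∑ θ, |μ θ - 0| :=
        sum_mul_le_sum_mul_add hx fun i => sum_mul_le_sum_mul_add_sum_abs_sub hA μ 0 i _
    _ = ∑ θ, |μ θ| := by simp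

theorem gameVal_le_add (hr : 0 < r) (hc : 0 < c) (hA : ∀ θ i j, |A θ i j| ≤ 1)
    (μ ν : Fin M → ℝ) :
    gameVal M r c A μ ≤ gameVal M r c A ν + ∑ θ, |μ θ - ν θ| := by
  have : Nonempty (Fin c) := ⟨⟨0, hc⟩⟩
  refine csSup_le (gameVal_set_nonempty hr A μ) ?_
  rintro _ ⟨x, hx, rfl⟩
  calc (⨅ j : Fin c, ∑ i, x i * ∑ θ, μ θ * A θ i j)
      ≤ (⨅ j : Fin c, ∑ i, x i * ∑ θ, ν θ * A θ i j) + ∑ θ, |μ θ - ν θ| := by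
        rw [ciInf_add (Set.finite_range _).bddBelow]
        exact ciInf_mono (Set.finite_range _).bddBelow fun j =>
          sum_mul_le_sum_mul_add hx fun i => sum_mul_le_sum_mul_add_sum_abs_sub hA μ ν i j
    _ ≤ gameVal M r c A ν + ∑ θ, |μ θ - ν θ| :=
        add_le_add_left (le_csSup (gameVal_set_bddAbove hc hA ν) ⟨x, hx, rfl⟩) _

end GameValue

section Geometry

variable {ι : Type*} [Fintype ι]

theorem subsingleton_Ioo_of_mem_extremePoints {lo hi y : ι → ℝ} {s : ℝ}
    (hy : y ∈ (Set.Icc lo hi ∩ {z | ∑ i, z i = s}).extremePoints ℝ) :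
    {i | y i ∈ Set.Ioo (lo i) (hi i)}.Subsingleton := by
  classical
  intro a ⟨ha₁, ha₂⟩ b ⟨hb₁, hb₂⟩
  by_contra hab
  set ε := min (min (y a - lo a) (hi a - y a)) (min (y b - lo b) (hi b - y b))
  have hε : 0 < ε :=
    lt_min (lt_min (by linarith) (by linarith)) (lt_min (by linarith) (by linarith))
  have hεa : ε ≤ y a - lo a ∧ ε ≤ hi a - y a := ⟨by simp [ε], by simp [ε]⟩
  have hεb : ε ≤ y b - lo b ∧ ε ≤ hi b - y b := ⟨by simp [ε], by simp [ε]⟩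
  set d : ι → ℝ := Pi.single a ε - Pi.single b ε
  have hmove : ∀ t : ℝ, |t| ≤ 1 → y + t • d ∈ Set.Icc lo hi ∩ {z | ∑ i, z i = s} := by
    intro t ht
    obtain ⟨⟨hlo, hhi⟩, hsum⟩ := hy.1
    have htε : |t * ε| ≤ ε := by
      rw [abs_mul, abs_of_pos hε]; exact mul_le_of_le_one_left hε.le ht
    obtain ⟨htε₁, htε₂⟩ := abs_le.1 htε
    have hbox : ∀ i, lo i ≤ (y + t • d) i ∧ (y + t • d) i ≤ hi i := by
      intro i
      rcases eq_or_ne i a with rfl | hia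
      · simp only [d, Pi.add_apply, Pi.smul_apply, Pi.sub_apply, Pi.single_eq_same,
          Pi.single_eq_of_ne hab, smul_eq_mul]
        constructor <;> linarith
      rcases eq_or_ne i b with rfl | hib
      · simp only [d, Pi.add_apply, Pi.smul_apply, Pi.sub_apply, Pi.single_eq_same,
          Pi.single_eq_of_ne hia, smul_eq_mul]
        constructor <;> linarith
      · simpa [d, hia, hib] using ⟨hlo i, hhi i⟩
    exact ⟨⟨fun i => (hbox i).1, fun i => (hbox i).2⟩,
      by simpa [d, sum_add_distrib, mul_sub, ← mul_sum] using hsum⟩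
  have hseg : y ∈ openSegment ℝ (y + (-1 : ℝ) • d) (y + (1 : ℝ) • d) :=
    ⟨1 / 2, 1 / 2, by norm_num, by norm_num, by norm_num, by
      ext i; simp only [Pi.add_apply, Pi.smul_apply, smul_eq_mul]; ring⟩
  have hd : y + (1 : ℝ) • d = y :=
    ((mem_extremePoints.1 hy).2 _ (hmove (-1) (by norm_num)) _ (hmove 1 (by norm_num)) hseg).2
  have := congrFun hd a
  simp [d, Ne.symm hab] at this
  exact hε.ne' this

theorem notMem_Ioo_of_mem_zmultiples {δ q x : ℝ} (hq : q ∈ AddSubgroup.zmultiples δ)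
    (hx : x ∈ AddSubgroup.zmultiples δ) : x ∉ Set.Ioo q (q + δ) := by
  rintro ⟨h₁, h₂⟩
  obtain ⟨m, rfl⟩ := AddSubgroup.mem_zmultiples_iff.1 hq
  obtain ⟨n, rfl⟩ := AddSubgroup.mem_zmultiples_iff.1 hx
  have hδ : 0 < δ := by linarith
  simp only [zsmul_eq_mul] at h₁ h₂
  have hmn : m < n := by exact_mod_cast lt_of_mul_lt_mul_right h₁ hδ.le
  have hnm : n < m + 1 := by
    have : (n : ℝ) * δ < ((m + 1 : ℤ) : ℝ) * δ := by push_cast; linarith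
    exact_mod_cast lt_of_mul_lt_mul_right this hδ.le
  omega

theorem eq_or_eq_add_of_mem_extremePoints {δ s : ℝ} {q y : ι → ℝ}
    (hq : ∀ i, q i ∈ AddSubgroup.zmultiples δ) (hs : s ∈ AddSubgroup.zmultiples δ)
    (hy : y ∈ (Set.Icc q (fun i => q i + δ) ∩ {z | ∑ i, z i = s}).extremePoints ℝ) (i : ι) :
    y i = q i ∨ y i = q i + δ := by
  classical
  obtain ⟨⟨hlo, hhi⟩, hsum⟩ := hy.1
  by_contra! h
  have hfree : y i ∈ Set.Ioo (q i) (q i + δ) :=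
    ⟨(hlo i).lt_of_ne h.1.symm, (hhi i).lt_of_ne h.2⟩
  have hgrid : ∀ j ∈ univ.erase i, y j ∈ AddSubgroup.zmultiples δ := by
    intro j hj
    have : y j ∉ Set.Ioo (q j) (q j + δ) := fun hj' =>
      (ne_of_mem_erase hj) (subsingleton_Ioo_of_mem_extremePoints hy hj' hfree)
    rcases (hlo j).eq_or_lt with hj' | hj'
    · exact hj' ▸ hq j
    rcases (hhi j).eq_or_lt with hj'' | hj''
    · exact hj'' ▸ add_mem (hq j) (AddSubgroup.mem_zmultiples δ)
    · exact absurd ⟨hj', hj''⟩ this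
  have hyi : y i = s - ∑ j ∈ univ.erase i, y j := by
    rw [← hsum, ← add_sum_erase _ _ (mem_univ i)]; ring
  exact notMem_Ioo_of_mem_zmultiples (hq i)
    (hyi ▸ sub_mem hs (AddSubgroup.sum_mem _ hgrid)) hfree

theorem mem_convexHull_nearby_grid {δ : ℝ} (hδ : 0 < δ) (hone : (1 : ℝ) ∈ AddSubgroup.zmultiples δ)
    {p : ι → ℝ} (hp : p ∈ stdSimplex ℝ ι) :
    p ∈ convexHull ℝ {y ∈ stdSimplex ℝ ι |
      ∀ i, y i ∈ AddSubgroup.zmultiples δ ∧ |y i - p i| ≤ δ} := by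
  set q : ι → ℝ := fun i => ⌊p i / δ⌋ * δ
  have hq : ∀ i, q i ∈ AddSubgroup.zmultiples δ := fun i =>
    AddSubgroup.mem_zmultiples_iff.2 ⟨⌊p i / δ⌋, zsmul_eq_mul _ _⟩
  have hq0 : ∀ i, 0 ≤ q i := fun i =>
    mul_nonneg (Int.cast_nonneg_iff.2 (Int.floor_nonneg.2 (div_nonneg (hp.1 i) hδ.le))) hδ.le
  have hqp : ∀ i, q i ≤ p i ∧ p i ≤ q i + δ := fun i =>
    ⟨(le_div_iff₀ hδ).1 (Int.floor_le _),
      by have := (div_lt_iff₀ hδ).1 (Int.lt_floor_add_one (p i / δ)); simp only [q]; linarith⟩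
  set P := Set.Icc q (fun i => q i + δ) ∩ {z | ∑ i, z i = 1}
  have hpP : p ∈ P := ⟨⟨fun i => (hqp i).1, fun i => (hqp i).2⟩, hp.2⟩
  have hext : P.extremePoints ℝ ⊆ Set.univ.pi fun i => {q i, q i + δ} := fun y hy i _ =>
    eq_or_eq_add_of_mem_extremePoints hq hone hy i
  have hgrid : P.extremePoints ℝ ⊆ {y ∈ stdSimplex ℝ ι |
      ∀ i, y i ∈ AddSubgroup.zmultiples δ ∧ |y i - p i| ≤ δ} := by
    intro y hy
    obtain ⟨⟨hlo, hhi⟩, hsum⟩ := extremePoints_subset hy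
    refine ⟨⟨fun i => (hq0 i).trans (hlo i), hsum⟩, fun i => ⟨?_, ?_⟩⟩
    · rcases eq_or_eq_add_of_mem_extremePoints hq hone hy i with h | h <;> rw [h]
      exacts [hq i, add_mem (hq i) (AddSubgroup.mem_zmultiples δ)]
    · simpa using abs_sub_le_of_le_of_le (hlo i) (hhi i) (hqp i).1 (hqp i).2
  have hcompact : IsCompact P :=
    isCompact_Icc.inter_right (isClosed_eq (continuous_finsetSum _ fun i _ => continuous_apply i)
      continuous_const)
  have hconvex : Convex ℝ P :=
    (convex_Icc _ _).inter <|
      convex_hyperplane ⟨fun _ _ => sum_add_distrib, fun _ _ => by simp [mul_sum]⟩ _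
  have hfinite : (P.extremePoints ℝ).Finite :=
    (Set.Finite.pi fun i => Set.toFinite _).subset hext
  rw [← closure_convexHull_extremePoints hcompact hconvex,
    (hfinite.isCompact_convexHull ℝ).isClosed.closure_eq] at hpP
  exact convexHull_mono hgrid hpP

end Geometry

theorem exists_fin_refinement_of_mem_convexHull {E ι : Type*} [AddCommGroup E] [Module ℝ E]
    [Fintype ι]
    (w : ι → ℝ) (p : ι → E) (hw : ∀ i, 0 ≤ w i) (C : ι → Set E)
    (hC : ∀ i, p i ∈ convexHull ℝ (C i)) (f : E → ℝ) (g : ι → ℝ)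
    (hfg : ∀ i, ∀ y ∈ C i, g i ≤ f y) :
    ∃ (k' : ℕ) (w' : Fin k' → ℝ) (p' : Fin k' → E), (∀ j, 0 ≤ w' j) ∧
      (∀ j, ∃ i, p' j ∈ C i) ∧ ∑ j, w' j • p' j = ∑ i, w i • p i ∧
      ∑ i, w i * g i ≤ ∑ j, w' j * f (p' j) := by
  choose κ _ β z hβ0 hβ1 hzC hβz using fun i => mem_convexHull_iff_exists_fintype.1 (hC i)
  let e := (Fintype.equivFin (Σ i, κ i)).symm
  refine ⟨_, fun j => w (e j).1 * β _ (e j).2, fun j => z _ (e j).2,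
    fun j => mul_nonneg (hw _) (hβ0 _ _), fun j => ⟨_, hzC _ _⟩, ?_, ?_⟩
  · rw [e.sum_comp (fun x => (w x.1 * β _ x.2) • z _ x.2), Fintype.sum_sigma]
    simp only [mul_smul, ← smul_sum, hβz]
  · rw [e.sum_comp (fun x => w x.1 * β _ x.2 * f (z _ x.2)), Fintype.sum_sigma]
    refine sum_le_sum fun i _ => ?_
    calc w i * g i = ∑ t, w i * β i t * g i := by rw [← sum_mul, ← mul_sum, hβ1, mul_one]
      _ ≤ ∑ t, w i * β i t * f (z i t) := sum_le_sum fun t _ =>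
          mul_le_mul_of_nonneg_left (hfg i _ (hzC i t)) (mul_nonneg (hw i) (hβ0 i t))

theorem grid_signaling_approx_general (M r c : ℕ) (hr : 0 < r) (hc : 0 < c)
    (A : Fin M → Matrix (Fin r) (Fin c) ℝ)
    (hA : ∀ θ i j, |A θ i j| ≤ 1)
    (δ : ℝ) (hδ0 : 0 < δ)
    (hint : ∃ N : ℕ, 0 < N ∧ δ = 1 / N)
    (l : Fin M → ℝ) (hl : l ∈ stdSimplex ℝ (Fin M))
    (k : ℕ) (w : Fin k → ℝ) (p : Fin k → Fin M → ℝ)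
    (hw : ∀ i, 0 ≤ w i) (hp : ∀ i, p i ∈ stdSimplex ℝ (Fin M))
    (hdecomp : ∀ θ, ∑ i, w i * p i θ = l θ) :
    ∃ (k' : ℕ) (w' : Fin k' → ℝ) (p' : Fin k' → Fin M → ℝ),
      (∀ i, 0 ≤ w' i) ∧ (∀ i, p' i ∈ stdSimplex ℝ (Fin M)) ∧
      (∀ i θ, ∃ z : ℤ, p' i θ = z * δ) ∧
      (∀ θ, ∑ i, w' i * p' i θ = l θ) ∧
      (∑ i, w i * gameVal M r c A (p i)) - M * δ ≤
        ∑ i, w' i * gameVal M r c A (p' i) := by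
  obtain ⟨N, hN, hδN⟩ := hint
  have hone : (1 : ℝ) ∈ AddSubgroup.zmultiples δ :=
    AddSubgroup.mem_zmultiples_iff.2 ⟨N, by simp [hδN, hN.ne']⟩
  have hwsum : ∑ i, w i = 1 := by
    simp_rw [← hl.2, ← hdecomp, sum_comm (γ := Fin M), ← mul_sum, (hp _).2, mul_one]
  obtain ⟨k', w', p', hw', hp', hbary, hval⟩ := exists_fin_refinement_of_mem_convexHull w p hw _
    (fun i => mem_convexHull_nearby_grid hδ0 hone (hp i)) (gameVal M r c A)
    (fun i => gameVal M r c A (p i) - M * δ) fun i y hy => by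
      have hdist : ∑ θ, |p i θ - y θ| ≤ M * δ := by
        simpa [abs_sub_comm] using sum_le_sum fun θ (_ : θ ∈ univ) => (hy.2 θ).2
      linarith [gameVal_le_add hr hc hA (p i) y]
  refine ⟨k', w', p', hw', fun j => ?_, fun j θ => ?_, fun θ => ?_, ?_⟩
  · obtain ⟨i, hi⟩ := hp' j
    exact hi.1
  · obtain ⟨i, hi⟩ := hp' j
    obtain ⟨z, hz⟩ := AddSubgroup.mem_zmultiples_iff.1 (hi.2 θ).1
    exact ⟨z, by rw [← hz, zsmul_eq_mul]⟩
  · simpa [Finset.sum_apply, hdecomp] using congrFun hbary θ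
  · calc _ = ∑ i, w i * (gameVal M r c A (p i) - M * δ) := by
          simp only [mul_sub, sum_sub_distrib, ← sum_mul, hwsum, one_mul]
      _ ≤ _ := hval

/-- Approximation by grid-supported signaling schemes: any signaling scheme for
the prior `λ` of value `v` can be replaced by one whose posteriors all lie on
the `δ`-grid `S_δ` (all coordinates integer multiples of `δ`), decomposing the
same prior, of value at least `v - M·δ`. -/
theorem grid_signaling_approx (M r c : ℕ) (hM : 0 < M) (hr : 0 < r) (hc : 0 < c)
    (A : Fin M → Matrix (Fin r) (Fin c) ℝ)
    (hA : ∀ θ i j, |A θ i j| ≤ 1)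
    (δ : ℝ) (hδ0 : 0 < δ) (hδ1 : δ ≤ 1)
    (hint : ∃ N : ℕ, 0 < N ∧ δ = 1 / N)
    (l : Fin M → ℝ) (hl : l ∈ stdSimplex ℝ (Fin M))
    (k : ℕ) (w : Fin k → ℝ) (p : Fin k → Fin M → ℝ)
    (hw : ∀ i, 0 ≤ w i) (hp : ∀ i, p i ∈ stdSimplex ℝ (Fin M))
    (hdecomp : ∀ θ, ∑ i, w i * p i θ = l θ) :
    ∃ (k' : ℕ) (w' : Fin k' → ℝ) (p' : Fin k' → Fin M → ℝ),
      (∀ i, 0 ≤ w' i) ∧ (∀ i, p' i ∈ stdSimplex ℝ (Fin M)) ∧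
      (∀ i θ, ∃ z : ℤ, p' i θ = z * δ) ∧
      (∀ θ, ∑ i, w' i * p' i θ = l θ) ∧
      (∑ i, w i * gameVal M r c A (p i)) - M * δ ≤
        ∑ i, w' i * gameVal M r c A (p' i) :=
  grid_signaling_approx_general M r c hr hc A hA δ hδ0 hint l hl k w p hw hp hdecomp
end

section
/- Grid approximation for γ-Lipschitz extended security games (core of the PTAS): Let γ > 0, ε > 0, set ε' := ε/γ, and assume 1/ε' is a positive integer. Suppose the game is γ-Lipschitz, i.e., ‖D(μ − μ')‖_∞ ≤ γ·‖μ − μ'‖_∞ for all μ, μ' ∈ Δ_M. Then for every w ∈ ℝ^M, max_{μ' ∈ S_{ε'}} ( val(μ') − w·μ' ) ≥ max_{μ ∈ Δ_M} ( val(μ) − w·μ ) − ε. -/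
open Finset

/-- The value of the extended security game specified by matrices `Ā, B, D`:
`val(μ) = max_{x ∈ Δ_r} [ xᵀBμ + min_j ((xᵀĀ)_j + (Dμ)_j) ]`. -/
noncomputable def valExt (M r c : ℕ) (Abar : Matrix (Fin r) (Fin c) ℝ)
    (B : Matrix (Fin r) (Fin M) ℝ) (D : Matrix (Fin c) (Fin M) ℝ)
    (μ : Fin M → ℝ) : ℝ :=
  sSup {t : ℝ | ∃ x ∈ stdSimplex ℝ (Fin r),
    t = (∑ i : Fin r, ∑ θ : Fin M, x i * B i θ * μ θ) +
      ⨅ j : Fin c, ((∑ i : Fin r, x i * Abar i j) + ∑ θ : Fin M, D j θ * μ θ)}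

/-!
`val(μ)` is the supremum over row strategies `x` of `xᵀBμ + min_j ((xᵀĀ)_j + (Dμ)_j)`. For fixed
`x`, subtracting `w·μ` leaves the linear form `ℓ·μ`, `ℓ = xᵀB - w`, plus the minimum. Round `Nμ`
to an integer vector with the same sum `N`, rounding up exactly on the `m` coordinates with the
largest `ℓ`, where `m` is the total fractional part. Each coordinate of `μ` moves by less than
`1/N`, `ℓ·μ` does not decrease, and by `γ`-Lipschitzness the minimum drops by at most `γ/N = ε`.
-/

section Rounding

variable {ι : Type*} [Fintype ι]

theorem exists_card_eq_threshold (ℓ : ι → ℝ) {m : ℕ} (hm : m ≤ Fintype.card ι) :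
    ∃ (S : Finset ι) (t : ℝ), #S = m ∧ (∀ a ∈ S, t ≤ ℓ a) ∧ ∀ b ∉ S, ℓ b ≤ t := by
  classical
  induction m with
  | zero =>
    obtain ⟨t, ht⟩ := (Set.finite_range ℓ).bddAbove
    exact ⟨∅, t, rfl, by simp, fun b _ => ht ⟨b, rfl⟩⟩
  | succ m ih =>
    obtain ⟨S, t, hcard, hge, hle⟩ := ih (by omega)
    have hne : Sᶜ.Nonempty := by rw [← card_pos, card_compl, hcard]; omega
    obtain ⟨b₀, hb₀, hmax⟩ := exists_max_image Sᶜ ℓ hne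
    have hb₀S : b₀ ∉ S := mem_compl.mp hb₀
    refine ⟨insert b₀ S, ℓ b₀, by rw [card_insert_of_notMem hb₀S, hcard], ?_, ?_⟩
    · intro a ha
      rcases mem_insert.mp ha with rfl | ha
      exacts [le_rfl, (hle b₀ hb₀S).trans (hge a ha)]
    · exact fun b hb => hmax b (mem_compl.mpr fun h => hb (mem_insert_of_mem h))

theorem exists_card_eq_sum_mul_le_sum (ℓ f : ι → ℝ)
    (hf : ∀ θ, f θ ∈ Set.Icc (0 : ℝ) 1) {m : ℕ} (hsum : ∑ θ, f θ = m) :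
    ∃ S : Finset ι, #S = m ∧ ∑ θ, ℓ θ * f θ ≤ ∑ θ ∈ S, ℓ θ := by
  classical
  have hm : m ≤ Fintype.card ι := by
    have : (m : ℝ) ≤ Fintype.card ι := by
      simpa [← hsum] using sum_le_sum fun θ (_ : θ ∈ univ) => (hf θ).2
    exact_mod_cast this
  obtain ⟨S, t, hcard, hge, hle⟩ := exists_card_eq_threshold ℓ hm
  refine ⟨S, hcard, ?_⟩
  -- `χ - f` has sum zero, and is `≥ 0` where `ℓ ≥ t` and `≤ 0` where `ℓ ≤ t`
  set χ : ι → ℝ := fun θ => if θ ∈ S then 1 else 0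
  have hexchange : 0 ≤ ∑ θ, (ℓ θ - t) * (χ θ - f θ) := sum_nonneg fun θ _ => by
    by_cases hθ : θ ∈ S
    · simp only [χ, hθ, if_true]
      exact mul_nonneg (sub_nonneg.2 (hge θ hθ)) (sub_nonneg.2 (hf θ).2)
    · simp only [χ, hθ, if_false]
      exact mul_nonneg_of_nonpos_of_nonpos (sub_nonpos.2 (hle θ hθ)) (by linarith [(hf θ).1])
  have hχ : ∑ θ, χ θ = m := by simp [χ, hcard]
  have hℓχ : ∑ θ, ℓ θ * χ θ = ∑ θ ∈ S, ℓ θ := by simp [χ]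
  simp only [sub_mul, mul_sub, sum_sub_distrib, ← mul_sum, hχ, hsum, hℓχ] at hexchange
  linarith

theorem exists_int_round_sum_eq (y ℓ : ι → ℝ) {n : ℤ} (hy : ∑ θ, y θ = n) :
    ∃ k : ι → ℤ, ∑ θ, k θ = n ∧ (∀ θ, ⌊y θ⌋ ≤ k θ ∧ k θ ≤ ⌊y θ⌋ + 1) ∧
      ∑ θ, ℓ θ * y θ ≤ ∑ θ, ℓ θ * k θ := by
  classical
  have hfract : ∑ θ, Int.fract (y θ) = ((n - ∑ θ, ⌊y θ⌋ : ℤ) : ℝ) := by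
    push_cast
    simp only [Int.fract, sum_sub_distrib, hy]
  obtain ⟨m, hm⟩ := Int.eq_ofNat_of_zero_le (a := n - ∑ θ, ⌊y θ⌋) <| by
    exact_mod_cast hfract ▸ sum_nonneg fun θ _ => Int.fract_nonneg (y θ)
  obtain ⟨S, hcard, hle⟩ := exists_card_eq_sum_mul_le_sum ℓ (fun θ => Int.fract (y θ))
    (fun θ => ⟨Int.fract_nonneg _, (Int.fract_lt_one _).le⟩) (by rw [hfract, hm]; norm_cast)
  refine ⟨fun θ => ⌊y θ⌋ + if θ ∈ S then 1 else 0, ?_, fun θ => ?_, ?_⟩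
  · simp only [sum_add_distrib, sum_boole, filter_mem_eq_inter, univ_inter, hcard]
    omega
  · dsimp only
    split_ifs <;> omega
  · calc ∑ θ, ℓ θ * y θ = ∑ θ, ℓ θ * ⌊y θ⌋ + ∑ θ, ℓ θ * Int.fract (y θ) := by
          simp only [← sum_add_distrib, ← mul_add, Int.floor_add_fract]
      _ ≤ ∑ θ, ℓ θ * ⌊y θ⌋ + ∑ θ ∈ S, ℓ θ := by gcongr
      _ = ∑ θ, ℓ θ * ((⌊y θ⌋ + if θ ∈ S then 1 else 0 : ℤ) : ℝ) := by
          simp [mul_add, sum_add_distrib]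

theorem exists_grid_round_mem_stdSimplex {N : ℕ} (hN : 0 < N) {μ : ι → ℝ}
    (hμ : μ ∈ stdSimplex ℝ ι) (ℓ : ι → ℝ) :
    ∃ μ' ∈ stdSimplex ℝ ι, (∀ θ, ∃ z : ℤ, μ' θ = z * (1 / N)) ∧
      ∑ θ, ℓ θ * μ θ ≤ ∑ θ, ℓ θ * μ' θ ∧ ∀ θ, |μ θ - μ' θ| ≤ 1 / N := by
  have hN' : (0 : ℝ) < N := by exact_mod_cast hN
  obtain ⟨k, hsum, hround, hle⟩ := exists_int_round_sum_eq (fun θ => N * μ θ) ℓ (n := N)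
    (by rw [← mul_sum, hμ.2, mul_one]; norm_cast)
  refine ⟨fun θ => k θ * (1 / N), ⟨fun θ => ?_, ?_⟩, fun θ => ⟨k θ, rfl⟩, ?_, fun θ => ?_⟩
  · have : 0 ≤ k θ := (Int.floor_nonneg.2 (mul_nonneg hN'.le (hμ.1 θ))).trans (hround θ).1
    positivity
  · rw [← sum_mul, ← Int.cast_sum, hsum, Int.cast_natCast]
    field_simp
  · calc ∑ θ, ℓ θ * μ θ = (∑ θ, ℓ θ * (N * μ θ)) * (1 / N) := by
          rw [sum_mul]; exact sum_congr rfl fun θ _ => by field_simp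
      _ ≤ (∑ θ, ℓ θ * k θ) * (1 / N) := by gcongr
      _ = ∑ θ, ℓ θ * (k θ * (1 / N)) := by rw [sum_mul]; simp only [mul_assoc]
  · have h₁ : (⌊N * μ θ⌋ : ℝ) ≤ k θ := by exact_mod_cast (hround θ).1
    have h₂ : (k θ : ℝ) ≤ ⌊N * μ θ⌋ + 1 := by exact_mod_cast (hround θ).2
    rw [show μ θ - k θ * (1 / N) = (N * μ θ - k θ) / N by field_simp, abs_div, abs_of_pos hN',
      div_le_div_iff_of_pos_right hN', abs_le]
    constructor <;> linarith [Int.floor_le (N * μ θ), Int.lt_floor_add_one (N * μ θ)]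

end Rounding

section ExtendedSecurityGame

variable {M r c : ℕ} (Abar : Matrix (Fin r) (Fin c) ℝ) (B : Matrix (Fin r) (Fin M) ℝ)
  (D : Matrix (Fin c) (Fin M) ℝ)

noncomputable def extPayoff (x : Fin r → ℝ) (μ : Fin M → ℝ) : ℝ :=
  (∑ i, ∑ θ, x i * B i θ * μ θ) + ⨅ j, ((∑ i, x i * Abar i j) + ∑ θ, D j θ * μ θ)

theorem valExt_eq_sSup_extPayoff (μ : Fin M → ℝ) :
    valExt M r c Abar B D μ =
      sSup {t | ∃ x ∈ stdSimplex ℝ (Fin r), t = extPayoff Abar B D x μ} :=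
  rfl

theorem exists_extPayoff_sub_le (hc : 0 < c) (w : Fin M → ℝ) :
    ∃ K, ∀ x ∈ stdSimplex ℝ (Fin r), ∀ μ ∈ stdSimplex ℝ (Fin M),
      extPayoff Abar B D x μ - ∑ θ, w θ * μ θ ≤ K := by
  let j₀ : Fin c := ⟨0, hc⟩
  obtain ⟨K, hK⟩ := ((isCompact_stdSimplex ℝ (Fin r)).prod
    (isCompact_stdSimplex ℝ (Fin M))).bddAbove_image (f := fun p =>
      (∑ i, ∑ θ, p.1 i * B i θ * p.2 θ) + ((∑ i, p.1 i * Abar i j₀) + ∑ θ, D j₀ θ * p.2 θ) -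
        ∑ θ, w θ * p.2 θ) (by fun_prop : Continuous _).continuousOn
  refine ⟨K, fun x hx μ hμ => le_trans ?_ (hK ⟨(x, μ), ⟨hx, hμ⟩, rfl⟩)⟩
  simp only [extPayoff]
  gcongr
  exact ciInf_le (Finite.bddBelow_range _) j₀

theorem extPayoff_le_valExt (hc : 0 < c) {x : Fin r → ℝ} (hx : x ∈ stdSimplex ℝ (Fin r))
    {μ : Fin M → ℝ} (hμ : μ ∈ stdSimplex ℝ (Fin M)) :
    extPayoff Abar B D x μ ≤ valExt M r c Abar B D μ := by
  obtain ⟨K, hK⟩ := exists_extPayoff_sub_le Abar B D hc 0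
  rw [valExt_eq_sSup_extPayoff]
  refine le_csSup ⟨K, ?_⟩ ⟨x, hx, rfl⟩
  rintro _ ⟨x', hx', rfl⟩
  simpa using hK x' hx' μ hμ

theorem exists_valExt_sub_le (hr : 0 < r) (hc : 0 < c) (w : Fin M → ℝ) :
    ∃ K, ∀ μ ∈ stdSimplex ℝ (Fin M), valExt M r c Abar B D μ - ∑ θ, w θ * μ θ ≤ K := by
  obtain ⟨K, hK⟩ := exists_extPayoff_sub_le Abar B D hc w
  refine ⟨K, fun μ hμ => sub_le_iff_le_add.2 ?_⟩
  refine csSup_le ⟨_, _, ite_eq_mem_stdSimplex ℝ ⟨0, hr⟩, rfl⟩ ?_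
  rintro _ ⟨x, hx, rfl⟩
  exact sub_le_iff_le_add.1 (hK x hx μ hμ)

theorem exists_grid_extPayoff_sub_ge (hc : 0 < c) {γ : ℝ} (hγ : 0 ≤ γ)
    (hLip : ∀ μ ∈ stdSimplex ℝ (Fin M), ∀ μ' ∈ stdSimplex ℝ (Fin M), ∀ j : Fin c,
      |(∑ θ : Fin M, D j θ * μ θ) - ∑ θ : Fin M, D j θ * μ' θ| ≤
        γ * ⨆ θ : Fin M, |μ θ - μ' θ|)
    {N : ℕ} (hN : 0 < N) {μ : Fin M → ℝ} (hμ : μ ∈ stdSimplex ℝ (Fin M)) (x : Fin r → ℝ)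
    (w : Fin M → ℝ) :
    ∃ μ' ∈ stdSimplex ℝ (Fin M), (∀ θ, ∃ z : ℤ, μ' θ = z * (1 / N)) ∧
      extPayoff Abar B D x μ - ∑ θ, w θ * μ θ - γ / N ≤
        extPayoff Abar B D x μ' - ∑ θ, w θ * μ' θ := by
  have : Nonempty (Fin c) := ⟨⟨0, hc⟩⟩
  set ℓ : Fin M → ℝ := fun θ => (∑ i, x i * B i θ) - w θ
  obtain ⟨μ', hμ', hgrid, hℓ, hclose⟩ := exists_grid_round_mem_stdSimplex hN hμ ℓ
  refine ⟨μ', hμ', hgrid, ?_⟩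
  have hlinear : ∀ ν : Fin M → ℝ,
      (∑ i, ∑ θ, x i * B i θ * ν θ) - ∑ θ, w θ * ν θ = ∑ θ, ℓ θ * ν θ := fun ν => by
    simp only [ℓ, sub_mul, sum_mul, sum_sub_distrib]
    rw [sum_comm]
  have hD : ∀ j, (∑ θ, D j θ * μ θ) - γ / N ≤ ∑ θ, D j θ * μ' θ := fun j => by
    have hsup : (⨆ θ, |μ θ - μ' θ|) ≤ 1 / N := Real.iSup_le hclose (by positivity)
    have := (abs_le.1 ((hLip μ hμ μ' hμ' j).trans (mul_le_mul_of_nonneg_left hsup hγ))).2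
    rw [mul_one_div] at this
    linarith
  have hinf : (⨅ j, ((∑ i, x i * Abar i j) + ∑ θ, D j θ * μ θ)) - γ / N ≤
      ⨅ j, ((∑ i, x i * Abar i j) + ∑ θ, D j θ * μ' θ) :=
    le_ciInf fun j => by linarith [ciInf_le (Finite.bddBelow_range
      fun j => (∑ i, x i * Abar i j) + ∑ θ, D j θ * μ θ) j, hD j]
  simp only [extPayoff]
  linarith [hlinear μ, hlinear μ']

end ExtendedSecurityGame

theorem grid_approx_lipschitz_general (M r c : ℕ) (hM : 0 < M) (hr : 0 < r) (hc : 0 < c)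
    (Abar : Matrix (Fin r) (Fin c) ℝ)
    (B : Matrix (Fin r) (Fin M) ℝ) (D : Matrix (Fin c) (Fin M) ℝ)
    (γ ε : ℝ) (hγ : 0 < γ)
    (hgrid : ∃ N : ℕ, 0 < N ∧ ε / γ = 1 / N)
    (hLip : ∀ μ ∈ stdSimplex ℝ (Fin M), ∀ μ' ∈ stdSimplex ℝ (Fin M), ∀ j : Fin c,
      |(∑ θ : Fin M, D j θ * μ θ) - ∑ θ : Fin M, D j θ * μ' θ| ≤
        γ * ⨆ θ : Fin M, |μ θ - μ' θ|)
    (w : Fin M → ℝ) :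
    sSup {t : ℝ | ∃ μ' ∈ stdSimplex ℝ (Fin M),
        (∀ θ, ∃ z : ℤ, μ' θ = z * (ε / γ)) ∧
        t = valExt M r c Abar B D μ' - ∑ θ : Fin M, w θ * μ' θ} ≥
      sSup {t : ℝ | ∃ μ ∈ stdSimplex ℝ (Fin M),
        t = valExt M r c Abar B D μ - ∑ θ : Fin M, w θ * μ θ} - ε := by
  obtain ⟨N, hN, hεγ⟩ := hgrid
  have hγN : γ / N = ε := by
    rw [div_eq_iff hγ.ne'] at hεγ
    rw [hεγ]
    ring
  obtain ⟨K, hK⟩ := exists_valExt_sub_le Abar B D hr hc w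
  have hbdd : BddAbove {t : ℝ | ∃ μ' ∈ stdSimplex ℝ (Fin M),
      (∀ θ, ∃ z : ℤ, μ' θ = z * (ε / γ)) ∧
      t = valExt M r c Abar B D μ' - ∑ θ : Fin M, w θ * μ' θ} :=
    ⟨K, by rintro _ ⟨μ', hμ', -, rfl⟩; exact hK μ' hμ'⟩
  rw [ge_iff_le, sub_le_iff_le_add]
  refine csSup_le ⟨_, _, ite_eq_mem_stdSimplex ℝ ⟨0, hM⟩, rfl⟩ ?_
  rintro _ ⟨μ, hμ, rfl⟩
  rw [sub_le_iff_le_add, valExt_eq_sSup_extPayoff]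
  refine csSup_le ⟨_, _, ite_eq_mem_stdSimplex ℝ ⟨0, hr⟩, rfl⟩ ?_
  rintro _ ⟨x, hx, rfl⟩
  obtain ⟨μ', hμ', hgrid, hle⟩ := exists_grid_extPayoff_sub_ge Abar B D hc hγ.le hLip hN hμ x w
  have hval := extPayoff_le_valExt Abar B D hc hx hμ'
  have hsup := le_csSup hbdd ⟨μ', hμ', by rwa [hεγ], rfl⟩
  linarith

/-- Grid approximation for `γ`-Lipschitz extended security games: if
`‖D(μ - μ')‖_∞ ≤ γ‖μ - μ'‖_∞` on the simplex, `ε' = ε/γ` and `1/ε'` is a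
positive integer, then for every `w`, the maximum of `val(μ') - w·μ'` over the
grid `S_{ε'}` is at least the maximum of `val(μ) - w·μ` over the whole simplex,
minus `ε`. -/
theorem grid_approx_lipschitz (M r c : ℕ) (hM : 0 < M) (hr : 0 < r) (hc : 0 < c)
    (Abar : Matrix (Fin r) (Fin c) ℝ)
    (B : Matrix (Fin r) (Fin M) ℝ) (D : Matrix (Fin c) (Fin M) ℝ)
    (γ ε : ℝ) (hγ : 0 < γ) (hε : 0 < ε)
    (hgrid : ∃ N : ℕ, 0 < N ∧ ε / γ = 1 / N)
    (hLip : ∀ μ ∈ stdSimplex ℝ (Fin M), ∀ μ' ∈ stdSimplex ℝ (Fin M), ∀ j : Fin c,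
      |(∑ θ : Fin M, D j θ * μ θ) - ∑ θ : Fin M, D j θ * μ' θ| ≤
        γ * ⨆ θ : Fin M, |μ θ - μ' θ|)
    (w : Fin M → ℝ) :
    sSup {t : ℝ | ∃ μ' ∈ stdSimplex ℝ (Fin M),
        (∀ θ, ∃ z : ℤ, μ' θ = z * (ε / γ)) ∧
        t = valExt M r c Abar B D μ' - ∑ θ : Fin M, w θ * μ' θ} ≥
      sSup {t : ℝ | ∃ μ ∈ stdSimplex ℝ (Fin M),
        t = valExt M r c Abar B D μ - ∑ θ : Fin M, w θ * μ θ} - ε :=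
  grid_approx_lipschitz_general M r c hM hr hc Abar B D γ ε hγ hgrid hLip w
end

section
/- Completeness of the reduction from best Nash to the maximum-prior/threshold-signaling problem: let η' ∈ ℝ, and suppose (x*, μ*) ∈ Δ_m × Δ_n is a Nash equilibrium of the bimatrix game (R, C), i.e., x*^T R μ* = max_{i ∈ [m]} (Rμ*)_i and x*^T C μ* = max_{j ∈ [n]} (x*^T C)_j, with social welfare x*^T(R+C)μ* ≥ η'. Then val(μ*) ≥ η'. -/
open Finset

/-- The value of the extended security game constructed from the bimatrix game
`(R, C)` with parameter `ε`: states `[n]`, row strategies `[m]`, column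
strategies `[m]×[n]`, `Ā_{i,(i',j)} = -(1/ε)C_{i,j}`,
`B_{i,j} = (1+1/ε)(R_{i,j}+C_{i,j})`, `D_{(i,j'),j} = -(1/ε)R_{i,j}`;
`val(μ) = max_{x ∈ Δ_m} [ xᵀBμ + min_k ((xᵀĀ)_k + (μᵀDᵀ)_k) ]`. -/
noncomputable def valESG (m n : ℕ) (ε : ℝ) (R C : Matrix (Fin m) (Fin n) ℝ)
    (μ : Fin n → ℝ) : ℝ :=
  sSup {t : ℝ | ∃ x ∈ stdSimplex ℝ (Fin m),
    t = (∑ i : Fin m, ∑ j : Fin n, x i * ((1 + 1 / ε) * (R i j + C i j)) * μ j) +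
      ⨅ k : Fin m × Fin n,
        ((∑ i : Fin m, x i * (-(1 / ε) * C i k.2)) +
          ∑ j : Fin n, (-(1 / ε) * R k.1 j) * μ j)}

/-- Completeness of the reduction from best Nash to threshold signaling: if
`(x*, μ*)` is a Nash equilibrium of the bimatrix game `(R, C)` with social
welfare at least `η'`, then `val(μ*) ≥ η'`. -/
theorem nash_implies_value (m n : ℕ) (hm : 0 < m) (hn : 0 < n)
    (ε : ℝ) (hε : 0 < ε)
    (R C : Matrix (Fin m) (Fin n) ℝ)
    (hR : ∀ i j, |R i j| ≤ 1) (hC : ∀ i j, |C i j| ≤ 1)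
    (η' : ℝ)
    (xs : Fin m → ℝ) (μs : Fin n → ℝ)
    (hxs : xs ∈ stdSimplex ℝ (Fin m)) (hμs : μs ∈ stdSimplex ℝ (Fin n))
    (hNashRow : ∑ i : Fin m, ∑ j : Fin n, xs i * R i j * μs j =
      ⨆ i : Fin m, ∑ j : Fin n, R i j * μs j)
    (hNashCol : ∑ i : Fin m, ∑ j : Fin n, xs i * C i j * μs j =
      ⨆ j : Fin n, ∑ i : Fin m, xs i * C i j)
    (hwelfare : η' ≤ ∑ i : Fin m, ∑ j : Fin n, xs i * (R i j + C i j) * μs j) :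
    η' ≤ valESG m n ε R C μs := by
  haveI : Nonempty (Fin m) := ⟨⟨0, hm⟩⟩
  haveI : Nonempty (Fin n) := ⟨⟨0, hn⟩⟩
  have hεinv : (0:ℝ) < 1/ε := by positivity
  set SR := ∑ i : Fin m, ∑ j : Fin n, xs i * R i j * μs j with hSRdef
  set SC := ∑ i : Fin m, ∑ j : Fin n, xs i * C i j * μs j with hSCdef
  have hrow : ∀ i : Fin m, ∑ j : Fin n, R i j * μs j ≤ SR := by
    intro i
    show _ ≤ SR
    rw [hNashRow]
    exact le_ciSup (f := fun i : Fin m => ∑ j : Fin n, R i j * μs j) (Set.Finite.bddAbove (Set.finite_range _)) i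
  have hcol : ∀ j : Fin n, ∑ i : Fin m, xs i * C i j ≤ SC := by
    intro j
    show _ ≤ SC
    rw [hNashCol]
    exact le_ciSup (f := fun j : Fin n => ∑ i : Fin m, xs i * C i j) (Set.Finite.bddAbove (Set.finite_range _)) j
  set t := (∑ i : Fin m, ∑ j : Fin n, xs i * ((1 + 1 / ε) * (R i j + C i j)) * μs j) +
      ⨅ k : Fin m × Fin n,
        ((∑ i : Fin m, xs i * (-(1 / ε) * C i k.2)) +
          ∑ j : Fin n, (-(1 / ε) * R k.1 j) * μs j) with htdef
  have hsum : (∑ i : Fin m, ∑ j : Fin n, xs i * ((1 + 1 / ε) * (R i j + C i j)) * μs j)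
      = (1 + 1/ε) * (SR + SC) := by
    rw [hSRdef, hSCdef, mul_add, Finset.mul_sum, Finset.mul_sum, ← Finset.sum_add_distrib]
    refine Finset.sum_congr rfl fun i _ => ?_
    rw [Finset.mul_sum, Finset.mul_sum, ← Finset.sum_add_distrib]
    exact Finset.sum_congr rfl fun j _ => by ring
  have hinf : -(1/ε) * (SR + SC) ≤
      ⨅ k : Fin m × Fin n,
        ((∑ i : Fin m, xs i * (-(1 / ε) * C i k.2)) +
          ∑ j : Fin n, (-(1 / ε) * R k.1 j) * μs j) := by
    refine le_ciInf fun k => ?_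
    have h1 : (∑ i : Fin m, xs i * (-(1 / ε) * C i k.2))
        = -(1/ε) * ∑ i : Fin m, xs i * C i k.2 := by
      rw [Finset.mul_sum]; exact Finset.sum_congr rfl fun i _ => by ring
    have h2 : (∑ j : Fin n, (-(1 / ε) * R k.1 j) * μs j)
        = -(1/ε) * ∑ j : Fin n, R k.1 j * μs j := by
      rw [Finset.mul_sum]; exact Finset.sum_congr rfl fun j _ => by ring
    rw [h1, h2]
    have hA := hcol k.2
    have hB := hrow k.1
    nlinarith [hεinv]
  have htge : SR + SC ≤ t := by
    rw [htdef, hsum]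
    have : (1 + 1/ε) * (SR + SC) + (-(1/ε) * (SR + SC)) = SR + SC := by ring
    linarith [hinf]
  have hmem : t ∈ {t : ℝ | ∃ x ∈ stdSimplex ℝ (Fin m),
    t = (∑ i : Fin m, ∑ j : Fin n, x i * ((1 + 1 / ε) * (R i j + C i j)) * μs j) +
      ⨅ k : Fin m × Fin n,
        ((∑ i : Fin m, x i * (-(1 / ε) * C i k.2)) +
          ∑ j : Fin n, (-(1 / ε) * R k.1 j) * μs j)} := ⟨xs, hxs, htdef⟩
  have hwelf : η' ≤ SR + SC := by
    refine hwelfare.trans (le_of_eq ?_)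
    rw [hSRdef, hSCdef, ← Finset.sum_add_distrib]
    refine Finset.sum_congr rfl fun i _ => ?_
    rw [← Finset.sum_add_distrib]
    exact Finset.sum_congr rfl fun j _ => by ring
  have hbdd : BddAbove {t : ℝ | ∃ x ∈ stdSimplex ℝ (Fin m),
    t = (∑ i : Fin m, ∑ j : Fin n, x i * ((1 + 1 / ε) * (R i j + C i j)) * μs j) +
      ⨅ k : Fin m × Fin n,
        ((∑ i : Fin m, x i * (-(1 / ε) * C i k.2)) +
          ∑ j : Fin n, (-(1 / ε) * R k.1 j) * μs j)} := by
    refine ⟨(1 + 1/ε) * 2 + 2 * (1/ε), ?_⟩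
    rintro t' ⟨x, hx, rfl⟩
    have hxn := hx.1
    have hxsum := hx.2
    have hμn := hμs.1
    have hμsum := hμs.2
    set k0 : Fin m × Fin n := (⟨0, hm⟩, ⟨0, hn⟩) with hk0
    have hinfle : (⨅ k : Fin m × Fin n,
        ((∑ i : Fin m, x i * (-(1 / ε) * C i k.2)) +
          ∑ j : Fin n, (-(1 / ε) * R k.1 j) * μs j)) ≤
        (∑ i : Fin m, x i * (-(1 / ε) * C i k0.2)) +
          ∑ j : Fin n, (-(1 / ε) * R k0.1 j) * μs j :=
      ciInf_le (Set.Finite.bddBelow (Set.finite_range _)) k0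
    have hb1 : (∑ i : Fin m, ∑ j : Fin n, x i * ((1 + 1 / ε) * (R i j + C i j)) * μs j)
        ≤ (1 + 1/ε) * 2 := by
      calc (∑ i : Fin m, ∑ j : Fin n, x i * ((1 + 1 / ε) * (R i j + C i j)) * μs j)
          ≤ ∑ i : Fin m, ∑ j : Fin n, x i * ((1 + 1/ε) * 2) * μs j := by
            refine Finset.sum_le_sum fun i _ => Finset.sum_le_sum fun j _ => ?_
            have hRC : R i j + C i j ≤ 2 := by
              have := abs_le.1 (hR i j); have := abs_le.1 (hC i j); linarith
            have h1 : (1 + 1/ε) * (R i j + C i j) ≤ (1 + 1/ε) * 2 :=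
              mul_le_mul_of_nonneg_left hRC (by positivity)
            have := mul_le_mul_of_nonneg_left h1 (hxn i)
            exact mul_le_mul_of_nonneg_right this (hμn j)
        _ = (1 + 1/ε) * 2 := by
            have : ∀ i : Fin m, ∑ j : Fin n, x i * ((1 + 1/ε) * 2) * μs j
                = x i * ((1 + 1/ε) * 2) := by
              intro i
              rw [← Finset.mul_sum, hμsum, mul_one]
            simp_rw [this, ← Finset.sum_mul, hxsum, one_mul]
    have hb2 : (∑ i : Fin m, x i * (-(1 / ε) * C i k0.2)) ≤ 1/ε := by
      calc (∑ i : Fin m, x i * (-(1 / ε) * C i k0.2))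
          ≤ ∑ i : Fin m, x i * (1/ε) := by
            refine Finset.sum_le_sum fun i _ => ?_
            have hc : -C i k0.2 ≤ 1 := by have := abs_le.1 (hC i k0.2); linarith
            have : -(1/ε) * C i k0.2 ≤ 1/ε := by nlinarith
            exact mul_le_mul_of_nonneg_left this (hxn i)
        _ = 1/ε := by rw [← Finset.sum_mul, hxsum, one_mul]
    have hb3 : (∑ j : Fin n, (-(1 / ε) * R k0.1 j) * μs j) ≤ 1/ε := by
      calc (∑ j : Fin n, (-(1 / ε) * R k0.1 j) * μs j)
          ≤ ∑ j : Fin n, (1/ε) * μs j := by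
            refine Finset.sum_le_sum fun j _ => ?_
            have hr : -R k0.1 j ≤ 1 := by have := abs_le.1 (hR k0.1 j); linarith
            have : -(1/ε) * R k0.1 j ≤ 1/ε := by nlinarith
            exact mul_le_mul_of_nonneg_right this (hμn j)
        _ = 1/ε := by rw [← Finset.mul_sum, hμsum, mul_one]
    linarith
  exact le_csSup_of_le hbdd hmem (hwelf.trans htge)
end

section
/- Soundness of the reduction from best Nash to the maximum-prior/threshold-signaling problem: let ε ∈ (0,1] and η' ∈ [−2,2], and suppose μ ∈ Δ_n satisfies val(μ) ≥ η' − 2ε. Then there exists x ∈ Δ_m such that x^T(R+C)μ ≥ η' − 2ε and max_{i ∈ [m]} (Rμ)_i + max_{j ∈ [n]} (x^T C)_j − x^T(R+C)μ ≤ 6ε (i.e., (x, μ) is a 6ε-approximate Nash equilibrium of the bimatrix game (R,C) with social welfare at least η' − 2ε). -/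
/-!
The security value is attained, since the payoff is continuous on the compact simplex. For the
optimal `x`, put `S = xᵀ(R+C)μ`, `A = maxᵢ (Rμ)ᵢ` and `B = maxⱼ (xᵀC)ⱼ`; the column player's
best reply is the pair of argmaxes, so the payoff is at most
`(1 + 1/ε) S - (A + B)/ε = S - (A + B - S)/ε`. Averages are at most maxima, so `S ≤ A + B`,
and the payoff is at most `S`, giving the welfare bound. Multiplying by `ε` and using `S ≤ 2`,
`-2 ≤ η'` gives `A + B - S ≤ ε (S - η' + 2ε) ≤ 6ε`.
-/

open Finset

section

variable {ι κ : Type*} [Fintype ι] [Fintype κ]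

lemma nonempty_of_mem_stdSimplex {w : ι → ℝ} (hw : w ∈ stdSimplex ℝ ι) : Nonempty ι := by
  by_contra h
  rw [not_nonempty_iff] at h
  simp [stdSimplex_of_isEmpty_index] at hw

lemma sum_mul_le_ciSup_of_mem_stdSimplex {w : ι → ℝ} (hw : w ∈ stdSimplex ℝ ι) (f : ι → ℝ) :
    ∑ i, w i * f i ≤ ⨆ i, f i :=
  calc ∑ i, w i * f i ≤ ∑ i, w i * ⨆ i, f i :=
        sum_le_sum fun i _ =>
          mul_le_mul_of_nonneg_left (le_ciSup (Set.finite_range f).bddAbove i) (hw.1 i)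
    _ = ⨆ i, f i := by rw [← sum_mul, hw.2, one_mul]

lemma sum_sum_mul_le_of_mem_stdSimplex {x : ι → ℝ} (hx : x ∈ stdSimplex ℝ ι)
    {μ : κ → ℝ} (hμ : μ ∈ stdSimplex ℝ κ) {M : ι → κ → ℝ} {c : ℝ} (hM : ∀ i j, M i j ≤ c) :
    ∑ i, ∑ j, x i * M i j * μ j ≤ c :=
  calc ∑ i, ∑ j, x i * M i j * μ j ≤ ∑ i, ∑ j, x i * c * μ j :=
        sum_le_sum fun i _ => sum_le_sum fun j _ =>
          mul_le_mul_of_nonneg_right (mul_le_mul_of_nonneg_left (hM i j) (hx.1 i)) (hμ.1 j)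
    _ = c := by simp only [← mul_sum, hμ.2, mul_one, ← sum_mul, hx.2, one_mul]

lemma sum_sum_mul_add_mul_eq (x : ι → ℝ) (R C : Matrix ι κ ℝ) (μ : κ → ℝ) :
    ∑ i, ∑ j, x i * (R i j + C i j) * μ j =
      ∑ i, x i * ∑ j, R i j * μ j + ∑ j, (∑ i, x i * C i j) * μ j := by
  simp only [mul_add, add_mul, sum_add_distrib, mul_sum, sum_mul, mul_assoc]
  rw [sum_comm (γ := κ)]

lemma welfare_le_ciSup_add_ciSup {x : ι → ℝ} (hx : x ∈ stdSimplex ℝ ι)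
    {μ : κ → ℝ} (hμ : μ ∈ stdSimplex ℝ κ) (R C : Matrix ι κ ℝ) :
    ∑ i, ∑ j, x i * (R i j + C i j) * μ j ≤
      (⨆ i, ∑ j, R i j * μ j) + ⨆ j, ∑ i, x i * C i j := by
  rw [sum_sum_mul_add_mul_eq]
  refine add_le_add (sum_mul_le_ciSup_of_mem_stdSimplex hx _) ?_
  simpa only [mul_comm _ (μ _)] using sum_mul_le_ciSup_of_mem_stdSimplex hμ _

noncomputable def esgPayoff (ε : ℝ) (R C : Matrix ι κ ℝ) (μ : κ → ℝ) (x : ι → ℝ) : ℝ :=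
  (∑ i, ∑ j, x i * ((1 + 1 / ε) * (R i j + C i j)) * μ j) +
    ⨅ k : ι × κ, ((∑ i, x i * (-(1 / ε) * C i k.2)) + ∑ j, (-(1 / ε) * R k.1 j) * μ j)

lemma continuous_esgPayoff [Nonempty ι] [Nonempty κ] (ε : ℝ) (R C : Matrix ι κ ℝ)
    (μ : κ → ℝ) : Continuous (esgPayoff ε R C μ) := by
  unfold esgPayoff
  simp only [← inf'_univ_eq_ciInf]
  refine Continuous.add (by fun_prop) (Continuous.finset_inf'_apply univ_nonempty fun k _ => ?_)
  fun_prop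

lemma esgPayoff_le [Nonempty ι] [Nonempty κ] (ε : ℝ) (R C : Matrix ι κ ℝ) (μ : κ → ℝ)
    (x : ι → ℝ) :
    esgPayoff ε R C μ x ≤ (1 + 1 / ε) * ∑ i, ∑ j, x i * (R i j + C i j) * μ j -
      1 / ε * ((⨆ i, ∑ j, R i j * μ j) + ⨆ j, ∑ i, x i * C i j) := by
  obtain ⟨i₀, hi₀⟩ := exists_eq_ciSup_of_finite (f := fun i => ∑ j, R i j * μ j)
  obtain ⟨j₀, hj₀⟩ := exists_eq_ciSup_of_finite (f := fun j => ∑ i, x i * C i j)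
  have hwelfare : ∑ i, ∑ j, x i * ((1 + 1 / ε) * (R i j + C i j)) * μ j =
      (1 + 1 / ε) * ∑ i, ∑ j, x i * (R i j + C i j) * μ j := by
    simp only [mul_sum]
    exact sum_congr rfl fun i _ => sum_congr rfl fun j _ => by ring
  have hbest_reply :
      ⨅ k : ι × κ, ((∑ i, x i * (-(1 / ε) * C i k.2)) + ∑ j, (-(1 / ε) * R k.1 j) * μ j) ≤
        -(1 / ε) * ((∑ j, R i₀ j * μ j) + ∑ i, x i * C i j₀) := by
    refine (ciInf_le (Set.finite_range _).bddBelow (i₀, j₀)).trans_eq ?_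
    simp only [mul_add, mul_sum]
    rw [add_comm]
    exact congrArg₂ _ (sum_congr rfl fun j _ => by ring) (sum_congr rfl fun i _ => by ring)
  rw [esgPayoff, hwelfare, ← hi₀, ← hj₀]
  linarith

lemma exists_valESG_eq_esgPayoff {m n : ℕ} (hm : 0 < m) [Nonempty (Fin n)] (ε : ℝ)
    (R C : Matrix (Fin m) (Fin n) ℝ) (μ : Fin n → ℝ) :
    ∃ x ∈ stdSimplex ℝ (Fin m), valESG m n ε R C μ = esgPayoff ε R C μ x := by
  have : Nonempty (Fin m) := Fin.pos_iff_nonempty.mp hm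
  have hval : valESG m n ε R C μ = sSup (esgPayoff ε R C μ '' stdSimplex ℝ (Fin m)) := by
    simp only [valESG, esgPayoff, Set.image, eq_comm (b := (_ : ℝ))]
  rw [hval]
  exact (isCompact_stdSimplex ℝ (Fin m)).exists_sSup_image_eq
    ⟨_, single_mem_stdSimplex ℝ ⟨0, hm⟩⟩ (continuous_esgPayoff ε R C μ).continuousOn

end

lemma approx_nash_bounds_of_le_payoff {ε η' S U : ℝ} (hε : 0 < ε) (hε1 : ε ≤ 1)
    (hη' : -2 ≤ η') (hS : S ≤ 2) (hSU : S ≤ U)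
    (h : η' - 2 * ε ≤ (1 + 1 / ε) * S - 1 / ε * U) :
    η' - 2 * ε ≤ S ∧ U - S ≤ 6 * ε := by
  have hscaled : ε * (η' - 2 * ε) ≤ (ε + 1) * S - U := by
    have := mul_le_mul_of_nonneg_left h hε.le
    rwa [show ε * ((1 + 1 / ε) * S - 1 / ε * U) = (ε + 1) * S - U by field_simp] at this
  refine ⟨le_of_mul_le_mul_left (by linarith) hε, ?_⟩
  nlinarith [mul_le_mul_of_nonneg_left (by linarith : S - η' ≤ 4) hε.le,
    mul_le_mul_of_nonneg_left hε1 hε.le]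

theorem value_implies_approx_nash_general (m n : ℕ) (hm : 0 < m)
    (ε : ℝ) (hε : 0 < ε) (hε1 : ε ≤ 1)
    (R C : Matrix (Fin m) (Fin n) ℝ)
    (hR : ∀ i j, |R i j| ≤ 1) (hC : ∀ i j, |C i j| ≤ 1)
    (η' : ℝ) (hη'lb : -2 ≤ η')
    (μ : Fin n → ℝ) (hμ : μ ∈ stdSimplex ℝ (Fin n))
    (hval : η' - 2 * ε ≤ valESG m n ε R C μ) :
    ∃ x ∈ stdSimplex ℝ (Fin m),
      η' - 2 * ε ≤ ∑ i : Fin m, ∑ j : Fin n, x i * (R i j + C i j) * μ j ∧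
      (⨆ i : Fin m, ∑ j : Fin n, R i j * μ j) +
          (⨆ j : Fin n, ∑ i : Fin m, x i * C i j) -
          ∑ i : Fin m, ∑ j : Fin n, x i * (R i j + C i j) * μ j ≤ 6 * ε := by
  have : Nonempty (Fin m) := Fin.pos_iff_nonempty.mp hm
  have : Nonempty (Fin n) := nonempty_of_mem_stdSimplex hμ
  obtain ⟨x, hx, hvalx⟩ := exists_valESG_eq_esgPayoff hm ε R C μ
  have hwelfare_le_two : ∑ i, ∑ j, x i * (R i j + C i j) * μ j ≤ 2 :=
    sum_sum_mul_le_of_mem_stdSimplex hx hμ fun i j =>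
      by linarith [(abs_le.mp (hR i j)).2, (abs_le.mp (hC i j)).2]
  refine ⟨x, hx, approx_nash_bounds_of_le_payoff hε hε1 hη'lb hwelfare_le_two
    (welfare_le_ciSup_add_ciSup hx hμ R C) ?_⟩
  exact hval.trans (hvalx ▸ esgPayoff_le ε R C μ x)

/-- Soundness of the reduction from best Nash to the maximum-prior/threshold-
signaling problem: if `ε ∈ (0,1]`, `η' ∈ [-2,2]` and `val(μ) ≥ η' - 2ε`, then
there is `x ∈ Δ_m` such that `(x, μ)` is a `6ε`-approximate Nash equilibrium of
`(R, C)` with social welfare at least `η' - 2ε`. -/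
theorem value_implies_approx_nash (m n : ℕ) (hm : 0 < m) (hn : 0 < n)
    (ε : ℝ) (hε : 0 < ε) (hε1 : ε ≤ 1)
    (R C : Matrix (Fin m) (Fin n) ℝ)
    (hR : ∀ i j, |R i j| ≤ 1) (hC : ∀ i j, |C i j| ≤ 1)
    (η' : ℝ) (hη'lb : -2 ≤ η') (hη'ub : η' ≤ 2)
    (μ : Fin n → ℝ) (hμ : μ ∈ stdSimplex ℝ (Fin n))
    (hval : η' - 2 * ε ≤ valESG m n ε R C μ) :
    ∃ x ∈ stdSimplex ℝ (Fin m),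
      η' - 2 * ε ≤ ∑ i : Fin m, ∑ j : Fin n, x i * (R i j + C i j) * μ j ∧
      (⨆ i : Fin m, ∑ j : Fin n, R i j * μ j) +
          (⨆ j : Fin n, ∑ i : Fin m, x i * C i j) -
          ∑ i : Fin m, ∑ j : Fin n, x i * (R i j + C i j) * μ j ≤ 6 * ε :=
  value_implies_approx_nash_general m n hm ε hε hε1 R C hR hC η' hη'lb μ hμ hval
end

section
/- Completeness of the biclique reduction: let G = (V, E) be a simple undirected graph, ρ ≥ 0, and r ≥ 1 an integer. Suppose G contains two disjoint vertex sets S, T with |S| = |T| = r such that every vertex of S is adjacent to every vertex of T. Then there exists μ ∈ Δ_V (namely the uniform distribution on S) with val(μ) ≥ 1 − ρ/r. -/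
open Finset

/-- The value of the network security game on a graph with adjacency matrix `B`
and parameter `ρ`, at posterior `μ`:
`val(μ) = max_{x ∈ Δ_V} ( xᵀBμ - ρ·max_v (x_v + μ_v) )`. -/
noncomputable def nsVal (V : Type*) [Fintype V] (B : Matrix V V ℝ) (ρ : ℝ)
    (μ : V → ℝ) : ℝ :=
  sSup {t : ℝ | ∃ x ∈ stdSimplex ℝ V,
    t = (∑ v : V, ∑ w : V, x v * B v w * μ w) - ρ * ⨆ v : V, (x v + μ v)}

/-! Take `μ` uniform on `S` and the strategy `x` uniform on `T`. Every vertex of `T` is adjacent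
to all of `S`, so `xᵀBμ = 1`, and as `S`, `T` are disjoint `x + μ` is `1/r` on `S ∪ T` and `0`
elsewhere, so `x` earns `1 - ρ/r`. The payoff is continuous on the compact simplex, so the set
whose supremum defines `val(μ)` is bounded above. -/

theorem continuous_ciSup_apply {ι X L : Type*} [Finite ι] [Nonempty ι] [TopologicalSpace X]
    [ConditionallyCompleteLattice L] [TopologicalSpace L] [ContinuousSup L] {f : ι → X → L}
    (hf : ∀ i, Continuous (f i)) : Continuous fun x => ⨆ i, f i x := by
  have := Fintype.ofFinite ι
  simp_rw [← sup'_univ_eq_ciSup]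
  exact Continuous.finset_sup'_apply univ_nonempty fun i _ => hf i

section
variable {V : Type*} [Fintype V]

noncomputable def nsPayoff (B : Matrix V V ℝ) (ρ : ℝ) (μ x : V → ℝ) : ℝ :=
  (∑ v, ∑ w, x v * B v w * μ w) - ρ * ⨆ v, (x v + μ v)

theorem continuous_nsPayoff [Nonempty V] (B : Matrix V V ℝ) (ρ : ℝ) (μ : V → ℝ) :
    Continuous (nsPayoff B ρ μ) := by
  unfold nsPayoff
  have := continuous_ciSup_apply (f := fun v (x : V → ℝ) => x v + μ v) (fun v => by fun_prop)
  fun_prop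

theorem nsPayoff_le_nsVal (B : Matrix V V ℝ) (ρ : ℝ) (μ : V → ℝ) {x : V → ℝ}
    (hx : x ∈ stdSimplex ℝ V) : nsPayoff B ρ μ x ≤ nsVal V B ρ μ := by
  have : Nonempty V := by
    by_contra h
    simpa [not_nonempty_iff.mp h] using hx.2
  refine le_csSup (((isCompact_stdSimplex ℝ V).bddAbove_image
    (continuous_nsPayoff B ρ μ).continuousOn).mono ?_) ⟨x, hx, rfl⟩
  rintro _ ⟨y, hy, rfl⟩
  exact ⟨y, hy, rfl⟩

noncomputable def uniformWeights (s : Finset V) : V → ℝ :=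
  Set.indicator s fun _ => (#s : ℝ)⁻¹

theorem sum_uniformWeights {s : Finset V} (hs : s.Nonempty) : ∑ v, uniformWeights s v = 1 := by
  rw [uniformWeights, sum_indicator_subset _ (subset_univ s), sum_const, nsmul_eq_mul]
  exact mul_inv_cancel₀ (by simpa using hs.ne_empty)

theorem uniformWeights_mem_stdSimplex {s : Finset V} (hs : s.Nonempty) :
    uniformWeights s ∈ stdSimplex ℝ V :=
  ⟨fun _ => Set.indicator_nonneg (fun _ _ => by positivity) _, sum_uniformWeights hs⟩

theorem sum_uniformWeights_mul_mul_uniformWeights {B : Matrix V V ℝ} {s t : Finset V}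
    (hs : s.Nonempty) (ht : t.Nonempty) (hB : ∀ v ∈ t, ∀ w ∈ s, B v w = 1) :
    ∑ v, ∑ w, uniformWeights t v * B v w * uniformWeights s w = 1 := by
  have hterm : ∀ v w, uniformWeights t v * B v w * uniformWeights s w =
      uniformWeights t v * uniformWeights s w := by
    intro v w
    by_cases hv : v ∈ t
    · by_cases hw : w ∈ s
      · rw [hB v hv w hw, mul_one]
      · simp [uniformWeights, hw]
    · simp [uniformWeights, hv]
  simp_rw [hterm, ← mul_sum, ← sum_mul, sum_uniformWeights hs, sum_uniformWeights ht, one_mul]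

theorem iSup_uniformWeights_add_uniformWeights {s t : Finset V} (hs : s.Nonempty)
    (hst : Disjoint s t) (hcard : #s = #t) :
    ⨆ v, (uniformWeights t v + uniformWeights s v) = (#s : ℝ)⁻¹ := by
  have hunion : (fun v => uniformWeights t v + uniformWeights s v) =
      Set.indicator (↑t ∪ ↑s) fun _ => (#s : ℝ)⁻¹ := by
    rw [Set.indicator_union_of_disjoint (disjoint_coe.mpr hst.symm), uniformWeights,
      uniformWeights, hcard]
  obtain ⟨v₀, hv₀⟩ := hs
  have : Nonempty V := ⟨v₀⟩
  rw [hunion]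
  refine le_antisymm (ciSup_le fun v => Set.indicator_apply_le' (fun _ => le_rfl)
    fun _ => by positivity) ?_
  refine le_ciSup_of_le (Set.finite_range _).bddAbove v₀ ?_
  rw [Set.indicator_of_mem (Set.mem_union_right _ hv₀)]

end

theorem biclique_completeness_general (V : Type*) [Fintype V]
    (G : SimpleGraph V) [DecidableRel G.Adj]
    (ρ : ℝ) (r : ℕ) (hr : 1 ≤ r)
    (S T : Finset V) (hST : Disjoint S T) (hS : S.card = r) (hT : T.card = r)
    (hadj : ∀ u ∈ S, ∀ v ∈ T, G.Adj u v) :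
    ∃ μ ∈ stdSimplex ℝ V,
      1 - ρ / r ≤ nsVal V (fun u v => if G.Adj u v then (1 : ℝ) else 0) ρ μ := by
  have hS₀ : S.Nonempty := card_pos.mp (by omega)
  have hT₀ : T.Nonempty := card_pos.mp (by omega)
  refine ⟨uniformWeights S, uniformWeights_mem_stdSimplex hS₀, ?_⟩
  calc 1 - ρ / r
      = nsPayoff (fun u v => if G.Adj u v then (1 : ℝ) else 0) ρ (uniformWeights S)
          (uniformWeights T) := by
        unfold nsPayoff
        rw [sum_uniformWeights_mul_mul_uniformWeights hS₀ hT₀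
          (fun v hv w hw => if_pos (hadj w hw v hv).symm),
          iSup_uniformWeights_add_uniformWeights hS₀ hST (hS.trans hT.symm), hS, div_eq_mul_inv]
    _ ≤ _ := nsPayoff_le_nsVal _ _ _ (uniformWeights_mem_stdSimplex hT₀)

/-- Completeness of the biclique reduction: if a simple graph `G` contains two
disjoint `r`-element vertex sets `S`, `T` with every vertex of `S` adjacent to
every vertex of `T`, then some posterior `μ ∈ Δ_V` (namely the uniform
distribution on `S`) has network-security-game value at least `1 - ρ/r`. -/
theorem biclique_completeness (V : Type*) [Fintype V] [DecidableEq V]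
    (G : SimpleGraph V) [DecidableRel G.Adj]
    (ρ : ℝ) (hρ : 0 ≤ ρ) (r : ℕ) (hr : 1 ≤ r)
    (S T : Finset V) (hST : Disjoint S T) (hS : S.card = r) (hT : T.card = r)
    (hadj : ∀ u ∈ S, ∀ v ∈ T, G.Adj u v) :
    ∃ μ ∈ stdSimplex ℝ V,
      1 - ρ / r ≤ nsVal V (fun u v => if G.Adj u v then (1 : ℝ) else 0) ρ μ :=
  biclique_completeness_general V G ρ r hr S T hST hS hT hadj
end

section
/- Soundness of the biclique reduction: let G = (V ∪ W, E) be a simple bipartite graph with parts V and W, let n = |V| + |W| ≥ 2, let r be an integer with 1 ≤ r ≤ n, and set ε = 1/(2n^8) and ρ = 2rnε. If there exists μ ∈ Δ_{V∪W} such that the value of the network security game on G with parameter ρ satisfies val(μ) ≥ 1 − (2n+2)ε, then G contains a complete bipartite subgraph K_{r,r}, i.e., there exist V'' ⊆ V and W'' ⊆ W with |V''| ≥ r, |W''| ≥ r, and every vertex of V'' adjacent to every vertex of W''. -/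
/-!
Take an attacker strategy `x` that is near-optimal against `μ`. Since the payoff `xᵀBμ` is at
most `1`, near-optimality forces `xᵀBμ ≥ 1 - δ` and, through the penalty term,
`x v + μ v ≤ M := δ / ρ` at every vertex. In a bipartite graph `xᵀBμ ≤ x(V) μ(W) + x(W) μ(V)`,
so up to `2δ` the two strategies live on opposite sides, say `x` on `V` and `μ` on `W`. The
vertices `B ⊆ W` with `μ w ≥ T` carry almost all of `μ`, and the vertices of `V` adjacent to all
of `B` carry almost all of `x`, because every other vertex of `V` loses payoff at least `T`.
All weights being at most `M`, both sets then have at least `r` elements.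
-/

open Finset

open Matrix

theorem Finset.le_card_of_mul_lt_sum {ι : Type*} {s : Finset ι} {f : ι → ℝ} {M : ℝ} {r : ℕ}
    (hM : 0 ≤ M) (hf : ∀ i ∈ s, f i ≤ M) (h : ((r : ℝ) - 1) * M < ∑ i ∈ s, f i) : r ≤ #s := by
  have hsum : ∑ i ∈ s, f i ≤ #s * M := by
    simpa using sum_le_card_nsmul s f M hf
  have hr : (r : ℝ) - 1 < #s := lt_of_mul_lt_mul_right (h.trans_le hsum) hM
  exact Nat.lt_add_one_iff.mp (by exact_mod_cast (show (r : ℝ) < #s + 1 by linarith))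

section

variable {ν : Type*} [Fintype ν]

theorem dotProduct_le_of_le_on_compl [DecidableEq ν] {x y : ν → ℝ} (hx : ∀ i, 0 ≤ x i)
    (s : Finset ν) {a b : ℝ} (hs : ∀ i ∈ s, y i ≤ a) (hsc : ∀ i ∉ s, y i ≤ b) :
    x ⬝ᵥ y ≤ a * ∑ i ∈ s, x i + b * ∑ i ∈ sᶜ, x i := by
  rw [dotProduct, ← sum_add_sum_compl s, mul_sum, mul_sum]
  refine add_le_add (sum_le_sum fun i hi => ?_) (sum_le_sum fun i hi => ?_)
  · rw [mul_comm a]; exact mul_le_mul_of_nonneg_left (hs i hi) (hx i)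
  · rw [mul_comm b]; exact mul_le_mul_of_nonneg_left (hsc i (mem_compl.mp hi)) (hx i)

theorem sum_sum_mul_mul_eq_dotProduct_mulVec (B : Matrix ν ν ℝ) (x μ : ν → ℝ) :
    ∑ v, ∑ w, x v * B v w * μ w = x ⬝ᵥ (B *ᵥ μ) := by
  simp only [dotProduct, mulVec, mul_sum, mul_assoc]

theorem exists_mem_stdSimplex_of_lt_nsVal {B : Matrix ν ν ℝ} {ρ c K : ℝ} {μ : ν → ℝ}
    (hρ : 0 ≤ ρ) (hμ : μ ∈ stdSimplex ℝ ν) (hK : ∀ x ∈ stdSimplex ℝ ν, x ⬝ᵥ (B *ᵥ μ) ≤ K)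
    (h : c < nsVal ν B ρ μ) :
    ∃ x ∈ stdSimplex ℝ ν, c ≤ x ⬝ᵥ (B *ᵥ μ) ∧ ∀ v, ρ * (x v + μ v) ≤ K - c := by
  simp only [nsVal, sum_sum_mul_mul_eq_dotProduct_mulVec] at h
  obtain ⟨t, ⟨x, hx, rfl⟩, hct⟩ := exists_lt_of_lt_csSup (by exact ⟨_, μ, hμ, rfl⟩) h
  have hsup : ∀ v, x v + μ v ≤ ⨆ v, (x v + μ v) := le_ciSup (Finite.bddAbove_range _)
  have hpen := mul_nonneg hρ (Real.iSup_nonneg fun v => add_nonneg (hx.1 v) (hμ.1 v))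
  refine ⟨x, hx, by linarith, fun v => ?_⟩
  linarith [hK x hx, mul_le_mul_of_nonneg_left (hsup v) hρ]

theorem le_two_mul_of_mul_add_mul_le {a b δ : ℝ} (ha₀ : 0 ≤ a) (ha₁ : a ≤ 1) (hb₀ : 0 ≤ b)
    (hb₁ : b ≤ 1) (hδ : δ ≤ 1 / 4) (h : a * b + (1 - a) * (1 - b) ≤ δ) :
    (1 - a ≤ 2 * δ ∧ b ≤ 2 * δ) ∨ (a ≤ 2 * δ ∧ 1 - b ≤ 2 * δ) := by
  have hab := mul_nonneg ha₀ hb₀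
  have hab' := mul_nonneg (sub_nonneg.mpr ha₁) (sub_nonneg.mpr hb₁)
  rcases le_total (1 / 2) a with ha | ha
  · have hb : b ≤ 2 * δ := by nlinarith
    exact Or.inl ⟨by nlinarith, hb⟩
  · have hb : 1 - b ≤ 2 * δ := by nlinarith
    exact Or.inr ⟨by nlinarith, hb⟩

namespace SimpleGraph

variable [DecidableEq ν] {G : SimpleGraph ν} [DecidableRel G.Adj] {x μ : ν → ℝ}

omit [DecidableEq ν] in
theorem adjMatrix_mulVec_le_sum (hμ : ∀ w, 0 ≤ μ w) (u : ν) :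
    (G.adjMatrix ℝ *ᵥ μ) u ≤ ∑ w, μ w := by
  rw [adjMatrix_mulVec_apply]
  exact sum_le_univ_sum_of_nonneg hμ

theorem adjMatrix_mulVec_le_sum_sub {u w : ν} (hμ : ∀ w, 0 ≤ μ w) (huw : ¬G.Adj u w) :
    (G.adjMatrix ℝ *ᵥ μ) u ≤ ∑ w, μ w - μ w := by
  rw [adjMatrix_mulVec_apply, ← sum_erase_eq_sub (mem_univ w)]
  refine sum_le_sum_of_subset_of_nonneg (fun v hv => ?_) fun v _ _ => hμ v
  rw [mem_neighborFinset] at hv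
  exact mem_erase.mpr ⟨fun h => huw (h ▸ hv), mem_univ v⟩

theorem dotProduct_adjMatrix_mulVec_le_one (hx : x ∈ stdSimplex ℝ ν) (hμ : μ ∈ stdSimplex ℝ ν) :
    x ⬝ᵥ (G.adjMatrix ℝ *ᵥ μ) ≤ 1 := by
  calc x ⬝ᵥ (G.adjMatrix ℝ *ᵥ μ) ≤ 1 * ∑ i ∈ ∅, x i + 1 * ∑ i ∈ ∅ᶜ, x i :=
        dotProduct_le_of_le_on_compl hx.1 ∅ (by simp)
          fun u _ => hμ.2 ▸ adjMatrix_mulVec_le_sum hμ.1 u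
    _ = 1 := by simp [hx.2]

theorem dotProduct_adjMatrix_mulVec_le_of_isBipartiteWith {s : Finset ν}
    (hG : G.IsBipartiteWith s (sᶜ : Finset ν)) (hx : ∀ i, 0 ≤ x i) (hμ : ∀ i, 0 ≤ μ i) :
    x ⬝ᵥ (G.adjMatrix ℝ *ᵥ μ) ≤
      (∑ w ∈ sᶜ, μ w) * ∑ u ∈ s, x u + (∑ w ∈ s, μ w) * ∑ u ∈ sᶜ, x u := by
  refine dotProduct_le_of_le_on_compl hx s (fun u hu => ?_) fun u hu => ?_ <;>
    rw [adjMatrix_mulVec_apply] <;> refine sum_le_sum_of_subset_of_nonneg ?_ fun w _ _ => hμ w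
  · exact isBipartiteWith_neighborFinset_subset hG hu
  · exact isBipartiteWith_neighborFinset_subset' hG (by simpa using hu)

theorem concentrated_of_isBipartiteWith {s : Finset ν} {δ : ℝ}
    (hG : G.IsBipartiteWith s (sᶜ : Finset ν)) (hx : x ∈ stdSimplex ℝ ν)
    (hμ : μ ∈ stdSimplex ℝ ν) (hδ : δ ≤ 1 / 4) (hP : 1 - δ ≤ x ⬝ᵥ (G.adjMatrix ℝ *ᵥ μ)) :
    (1 - 2 * δ ≤ ∑ u ∈ s, x u ∧ 1 - 2 * δ ≤ ∑ w ∈ sᶜ, μ w) ∨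
      (1 - 2 * δ ≤ ∑ u ∈ sᶜ, x u ∧ 1 - 2 * δ ≤ ∑ w ∈ s, μ w) := by
  have hbd := dotProduct_adjMatrix_mulVec_le_of_isBipartiteWith hG hx.1 hμ.1
  have hxs : ∑ u ∈ s, x u + ∑ u ∈ sᶜ, x u = 1 := hx.2 ▸ sum_add_sum_compl s x
  have hμs : ∑ w ∈ s, μ w + ∑ w ∈ sᶜ, μ w = 1 := hμ.2 ▸ sum_add_sum_compl s μ
  have hxs₀ := sum_nonneg fun u (_ : u ∈ s) => hx.1 u
  have hxsc₀ := sum_nonneg fun u (_ : u ∈ sᶜ) => hx.1 u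
  have hμs₀ := sum_nonneg fun w (_ : w ∈ s) => hμ.1 w
  have hμsc₀ := sum_nonneg fun w (_ : w ∈ sᶜ) => hμ.1 w
  rcases le_two_mul_of_mul_add_mul_le hxs₀ (by linarith) hμs₀ (by linarith) hδ
    (by nlinarith) with h | h
  · exact Or.inl ⟨by linarith, by linarith⟩
  · exact Or.inr ⟨by linarith, by linarith⟩

theorem exists_biclique_of_concentrated {V₀ W₀ : Finset ν} {r : ℕ} {T M δ : ℝ}
    (hx : x ∈ stdSimplex ℝ ν) (hμ : μ ∈ stdSimplex ℝ ν) (hT : 0 < T)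
    (hxM : ∀ v, x v ≤ M) (hμM : ∀ v, μ v ≤ M) (hP : 1 - δ ≤ x ⬝ᵥ (G.adjMatrix ℝ *ᵥ μ))
    (hW : ((r : ℝ) - 1) * M < ∑ w ∈ W₀, μ w - Fintype.card ν * T)
    (hV : ((r : ℝ) - 1) * M < ∑ u ∈ V₀, x u - δ / T) :
    ∃ A B : Finset ν, A ⊆ V₀ ∧ B ⊆ W₀ ∧ r ≤ #A ∧ r ≤ #B ∧ ∀ u ∈ A, ∀ w ∈ B, G.Adj u w := by
  have hM₀ : 0 ≤ M := by
    obtain ⟨w, -, -⟩ := exists_ne_zero_of_sum_ne_zero (hμ.2.symm ▸ one_ne_zero)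
    exact (hμ.1 w).trans (hμM w)
  set B := W₀.filter (T ≤ μ ·)
  set S := univ.filter fun u => ¬∀ w ∈ B, G.Adj u w
  set A := V₀.filter fun u => ∀ w ∈ B, G.Adj u w
  have hlight : ∑ w ∈ W₀.filter (¬T ≤ μ ·), μ w ≤ Fintype.card ν * T := by
    refine (sum_le_card_nsmul _ _ T fun w hw => (not_le.mp (mem_filter.mp hw).2).le).trans ?_
    rw [nsmul_eq_mul]
    gcongr
    exact_mod_cast card_le_univ _
  have hB : r ≤ #B := by
    refine le_card_of_mul_lt_sum hM₀ (fun w _ => hμM w) ?_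
    rw [← sum_filter_add_sum_filter_not W₀ (T ≤ μ ·)] at hW
    linarith
  -- a vertex missing some `w ∈ B` loses at least `μ w ≥ T` of its row mass
  have hS : x ⬝ᵥ (G.adjMatrix ℝ *ᵥ μ) ≤ 1 - T * ∑ u ∈ S, x u := by
    have hrow : ∀ u ∈ S, (G.adjMatrix ℝ *ᵥ μ) u ≤ 1 - T := fun u hu => by
      obtain ⟨w, hw, huw⟩ := not_forall₂.mp (mem_filter.mp hu).2
      have := adjMatrix_mulVec_le_sum_sub hμ.1 huw
      linarith [hμ.2, (mem_filter.mp hw).2]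
    have := dotProduct_le_of_le_on_compl hx.1 S hrow
      fun u _ => hμ.2 ▸ adjMatrix_mulVec_le_sum hμ.1 u
    rw [← hx.2, ← sum_add_sum_compl S]
    linarith
  have hA : r ≤ #A := by
    refine le_card_of_mul_lt_sum hM₀ (fun u _ => hxM u) ?_
    have hxS : ∑ u ∈ S, x u ≤ δ / T := by
      rw [le_div_iff₀ hT]; linarith
    have hsub : ∑ u ∈ V₀.filter fun u => ¬∀ w ∈ B, G.Adj u w, x u ≤ ∑ u ∈ S, x u :=
      sum_le_sum_of_subset_of_nonneg (filter_subset_filter _ (subset_univ V₀))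
        fun u _ _ => hx.1 u
    rw [← sum_filter_add_sum_filter_not V₀ fun u => ∀ w ∈ B, G.Adj u w] at hV
    linarith
  exact ⟨A, B, filter_subset _ _, filter_subset _ _, hA, hB, fun u hu => (mem_filter.mp hu).2⟩

end SimpleGraph

end

/- With `m = 1 / N`: `e = m⁸/2`, `δ = m⁷ + m⁸ + m¹⁶/4`, `T = m⁴` and `R M = 1 + m + m⁹/4`, so
`(R - 1) M ≤ (1 - m)(1 + m + m⁹/4) = 1 - m² + O(m⁹)`, while `2δ + N T ≤ 2δ + δ / T = m³ + O(m⁴)`. -/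
theorem biclique_margins {N R e δ T M : ℝ} (hN : 2 ≤ N) (hR : 1 ≤ R) (hRN : R ≤ N)
    (he : e = 1 / (2 * N ^ 8)) (hδ : δ = (2 * N + 2) * e + e ^ 2) (hT : T = 1 / N ^ 4)
    (hM : M = δ / (2 * R * N * e)) :
    δ ≤ 1 / 4 ∧ (R - 1) * M < 1 - 2 * δ - N * T ∧ (R - 1) * M < 1 - 2 * δ - δ / T := by
  obtain ⟨m, hm, rfl⟩ : ∃ m, 0 < m ∧ N = m⁻¹ := ⟨N⁻¹, by positivity, (inv_inv N).symm⟩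
  have hm2 : m ≤ 1 / 2 := by
    rw [le_inv_comm₀ (by norm_num) hm] at hN; linarith
  have hRm : R * m ≤ 1 := by
    simpa [hm.ne'] using mul_le_mul_of_nonneg_right hRN hm.le
  have he' : e = m ^ 8 / 2 := by rw [he]; field_simp
  have hδ' : δ = m ^ 7 + m ^ 8 + m ^ 16 / 4 := by rw [hδ, he']; field_simp; ring
  have hM' : R * M = 1 + m + m ^ 9 / 4 := by rw [hM, hδ', he']; field_simp
  have hNT : m⁻¹ * T = m ^ 3 := by rw [hT]; field_simp
  have hδT : δ / T = m ^ 3 + m ^ 4 + m ^ 12 / 4 := by rw [hT, hδ']; field_simp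
  have hM₀ : 0 ≤ M := by
    have := mul_pos (by linarith : (0 : ℝ) < R) hm
    nlinarith [pow_pos hm 9]
  have hRM : (R - 1) * M ≤ (1 + m + m ^ 9 / 4) * (1 - m) := by
    nlinarith [mul_le_mul_of_nonneg_right hRm hM₀]
  have hpow : ∀ j : ℕ, m ^ (j + 2) ≤ m ^ 2 * (1 / 2) ^ j := fun j => by
    rw [pow_add, mul_comm]
    exact mul_le_mul_of_nonneg_left (pow_le_pow_left₀ hm.le hm2 j) (by positivity)
  have h3 := hpow 1
  have h4 := hpow 2
  have h7 := hpow 5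
  have h8 := hpow 6
  have h12 := hpow 10
  have h16 := hpow 14
  norm_num at h3 h4 h7 h8 h12 h16
  have hm2' : m ^ 2 ≤ 1 / 4 := by nlinarith
  have hm10 : 0 ≤ m ^ 10 := by positivity
  refine ⟨by nlinarith, ?_, ?_⟩ <;> nlinarith

/-- Soundness of the biclique reduction: let `G` be a simple bipartite graph
with parts `V`, `W`, `n = |V| + |W| ≥ 2`, `1 ≤ r ≤ n`, `ε = 1/(2n^8)` and
`ρ = 2rnε`. If some posterior `μ` has network-security-game value at least
`1 - (2n+2)ε`, then `G` contains a complete bipartite subgraph `K_{r,r}`. -/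
theorem biclique_soundness (ν : Type*) [Fintype ν] [DecidableEq ν]
    (G : SimpleGraph ν) [DecidableRel G.Adj]
    (V W : Finset ν) (hcover : ∀ a : ν, a ∈ V ∨ a ∈ W) (hdisj : Disjoint V W)
    (hbip : ∀ u v : ν, G.Adj u v → (u ∈ V ∧ v ∈ W) ∨ (u ∈ W ∧ v ∈ V))
    (n : ℕ) (hn : n = Fintype.card ν) (hn2 : 2 ≤ n)
    (r : ℕ) (hr1 : 1 ≤ r) (hrn : r ≤ n)
    (μ : ν → ℝ) (hμ : μ ∈ stdSimplex ℝ ν)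
    (hval : 1 - (2 * (n : ℝ) + 2) * (1 / (2 * (n : ℝ) ^ 8)) ≤
      nsVal ν (fun u v => if G.Adj u v then (1 : ℝ) else 0)
        (2 * (r : ℝ) * (n : ℝ) * (1 / (2 * (n : ℝ) ^ 8))) μ) :
    ∃ V'' W'' : Finset ν, V'' ⊆ V ∧ W'' ⊆ W ∧ r ≤ V''.card ∧ r ≤ W''.card ∧
      ∀ u ∈ V'', ∀ v ∈ W'', G.Adj u v := by
  obtain rfl : W = Vᶜ := eq_compl_iff_isCompl.mpr ⟨hdisj.symm,
    codisjoint_iff.mpr (eq_univ_iff_forall.mpr fun a => by simpa [or_comm] using hcover a)⟩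
  have hG : G.IsBipartiteWith V (Vᶜ : Finset ν) :=
    ⟨disjoint_coe.mpr hdisj, fun u v h => by simpa using hbip u v h⟩
  subst hn
  set N : ℝ := (Fintype.card ν : ℝ)
  set e : ℝ := 1 / (2 * N ^ 8)
  set ρ : ℝ := 2 * r * N * e
  set δ : ℝ := (2 * N + 2) * e + e ^ 2
  set T : ℝ := 1 / N ^ 4
  set M : ℝ := δ / ρ
  have hρ : 0 < ρ := by positivity
  have hT : 0 < T := by positivity
  obtain ⟨hδ, hmarginW, hmarginV⟩ := biclique_margins (e := e) (δ := δ) (T := T) (M := M)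
    (Nat.ofNat_le_cast.mpr hn2) (Nat.one_le_cast.mpr hr1) (Nat.cast_le.mpr hrn) rfl rfl rfl rfl
  obtain ⟨x, hx, hP, hxμ⟩ := exists_mem_stdSimplex_of_lt_nsVal (c := 1 - δ) hρ.le hμ
    (fun _ hx => SimpleGraph.dotProduct_adjMatrix_mulVec_le_one hx hμ)
    (hval.trans_lt' (by simp [δ]; positivity))
  have hxμM : ∀ v, x v + μ v ≤ M := fun v => (le_div_iff₀ hρ).mpr (by linarith [hxμ v])
  have hxM : ∀ v, x v ≤ M := fun v => by linarith [hxμM v, hμ.1 v]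
  have hμM : ∀ v, μ v ≤ M := fun v => by linarith [hxμM v, hx.1 v]
  rcases SimpleGraph.concentrated_of_isBipartiteWith hG hx hμ hδ hP with ⟨hxV, hμW⟩ | ⟨hxW, hμV⟩
  · exact SimpleGraph.exists_biclique_of_concentrated hx hμ hT hxM hμM hP
      (by linarith) (by linarith)
  · obtain ⟨A, B, hA, hB, hrA, hrB, hAB⟩ := SimpleGraph.exists_biclique_of_concentrated
      (V₀ := Vᶜ) (W₀ := V) (r := r) hx hμ hT hxM hμM hP (by linarith) (by linarith)
    exact ⟨B, A, hB, hA, hrB, hrA, fun u hu w hw => (hAB w hw u hu).symm⟩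
end

section
/- Full revelation achieves the price of anarchy as its approximation ratio: Σ_μ α_μ val(μ) ≥ (1/ρ)·Σ_{θ ∈ Θ} λ_θ val(δ_θ) for every signaling scheme α for λ. That is, the full-revelation signaling scheme, whose expected cost is Σ_θ λ_θ val(δ_θ), has cost at most ρ times the cost of any (hence the optimal) signaling scheme. -/
open Finset

/-- Full revelation achieves the price of anarchy as its approximation ratio:
for any signaling scheme `α` for the prior `λ` in a Bayesian routing game,
`∑_μ α_μ val(μ) ≥ (1/ρ)·∑_θ λ_θ val(δ_θ)`, where
`val(μ) = ∑_θ μ_θ · c(θ, f_NE(μ))` and `ρ` bounds the price of anarchy: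
`c(θ, f_NE(δ_θ)) ≤ ρ·c(θ, g)` for every state `θ` and every feasible flow `g`. -/
theorem full_revelation_poa (Θ : Type*) [Fintype Θ] [DecidableEq Θ]
    (F : Type*) [Nonempty F]
    (c : Θ → F → ℝ) (hc : ∀ θ f, 0 ≤ c θ f)
    (fNE : (Θ → ℝ) → F)
    (ρ : ℝ) (hρ : 1 ≤ ρ)
    (poa : ∀ (θ : Θ) (g : F),
      c θ (fNE (fun θ' => if θ' = θ then (1 : ℝ) else 0)) ≤ ρ * c θ g)
    (l : Θ → ℝ) (hl : l ∈ stdSimplex ℝ Θ)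
    (k : ℕ) (w : Fin k → ℝ) (p : Fin k → Θ → ℝ)
    (hw : ∀ i, 0 ≤ w i) (hp : ∀ i, p i ∈ stdSimplex ℝ Θ)
    (hdecomp : ∀ θ, ∑ i, w i * p i θ = l θ) :
    (1 / ρ) * ∑ θ : Θ, l θ * c θ (fNE (fun θ' => if θ' = θ then (1 : ℝ) else 0)) ≤
      ∑ i, w i * ∑ θ : Θ, p i θ * c θ (fNE (p i)) := by
  have hρ0 : 0 < ρ := lt_of_lt_of_le one_pos hρ
  rw [div_mul_eq_mul_div, one_mul, div_le_iff₀ hρ0]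
  have key : ∑ θ : Θ, l θ * c θ (fNE (fun θ' => if θ' = θ then (1 : ℝ) else 0)) ≤
      ∑ i, w i * ∑ θ : Θ, p i θ * (ρ * c θ (fNE (p i))) := by
    calc ∑ θ : Θ, l θ * c θ (fNE (fun θ' => if θ' = θ then (1 : ℝ) else 0))
        = ∑ θ : Θ, ∑ i, w i * p i θ * c θ (fNE (fun θ' => if θ' = θ then (1 : ℝ) else 0)) := by
          refine Finset.sum_congr rfl fun θ _ => ?_
          rw [← hdecomp θ, Finset.sum_mul]
      _ = ∑ i, ∑ θ : Θ, w i * p i θ * c θ (fNE (fun θ' => if θ' = θ then (1 : ℝ) else 0)) :=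
          Finset.sum_comm
      _ ≤ ∑ i, ∑ θ : Θ, w i * p i θ * (ρ * c θ (fNE (p i))) := by
          refine Finset.sum_le_sum fun i _ => Finset.sum_le_sum fun θ _ => ?_
          exact mul_le_mul_of_nonneg_left (poa θ (fNE (p i)))
            (mul_nonneg (hw i) ((hp i).1 θ))
      _ = ∑ i, w i * ∑ θ : Θ, p i θ * (ρ * c θ (fNE (p i))) := by
          refine Finset.sum_congr rfl fun i _ => ?_
          rw [Finset.mul_sum]; exact Finset.sum_congr rfl fun θ _ => by ring
  calc ∑ θ : Θ, l θ * c θ (fNE (fun θ' => if θ' = θ then (1 : ℝ) else 0))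
      ≤ ∑ i, w i * ∑ θ : Θ, p i θ * (ρ * c θ (fNE (p i))) := key
    _ = (∑ i, w i * ∑ θ : Θ, p i θ * c θ (fNE (p i))) * ρ := by
        rw [Finset.sum_mul]
        refine Finset.sum_congr rfl fun i _ => ?_
        rw [mul_assoc, Finset.sum_mul]
        congr 1
        exact Finset.sum_congr rfl fun θ _ => by ring
end

section
/- Bi-density bound for Erdős–Rényi graphs: let ε > 0 and c ≥ 24·2.1·max{1, (1+ε)/ε²}. Then for every n ≥ 2, the probability that the random graph G ~ G(n, 1/2) contains vertex sets S, T ⊆ [n] with |S| ≥ c·log n, |T| ≥ c·log n, and bi-density_G(S, T) > (1+ε)/2 is at most 2/n³. -/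
open Finset Real

/-!
Averaging over subsets shows that if some `S, T` with `|S|, |T| ≥ c log n` have bi-density above
`(1 + ε) / 2`, then so do some `S', T'` of size exactly `m = ⌈c log n⌉`. For fixed `S', T'` the
number of adjacent ordered pairs is a sum of independent fair bits, one per edge, with weights at
most `2`; Hoeffding's exponential-moment bound with parameter `ε` gives probability at most
`exp (-ε² m² / 4)`. A union bound over the at most `n ^ (2 m)` pairs of `m`-sets finishes, since
`c ε² ≥ 20` makes `n ^ (2 m) * n ^ 3 * exp (-ε² m² / 4) ≤ 1`.
-/

theorem Finset.exists_subset_card_eq_sum_mul_le {α K : Type*} [DecidableEq α] [Field K]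
    [LinearOrder K] [IsStrictOrderedRing K] (f : α → K) {s : Finset α} {m : ℕ}
    (hm : m ≤ #s) :
    ∃ t ⊆ s, #t = m ∧ (∑ x ∈ s, f x) * m ≤ (∑ x ∈ t, f x) * #s := by
  induction s using Finset.strongInduction with
  | H s ih =>
  rcases Nat.eq_zero_or_pos m with rfl | hm0
  · exact ⟨∅, empty_subset _, rfl, by simp⟩
  rcases hm.eq_or_lt with rfl | hlt
  · exact ⟨s, subset_rfl, rfl, le_rfl⟩
  obtain ⟨x, hx, hmin⟩ := s.exists_min_image f (card_pos.mp (by omega))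
  obtain ⟨t, hts, htm, hsum⟩ :=
    ih (s.erase x) (erase_ssubset hx) (by rw [card_erase_of_mem hx]; omega)
  refine ⟨t, hts.trans (erase_subset _ _), htm, ?_⟩
  -- a minimal value is at most the average, so dropping it does not lower the average
  have hfx : (#s : K) * f x ≤ ∑ y ∈ s, f y := by
    simpa using card_nsmul_le_sum s f (f x) hmin
  rw [sum_erase_eq_sub hx, card_erase_of_mem hx, Nat.cast_sub (by omega), Nat.cast_one] at hsum
  have hk : (0 : K) < #s - 1 := by
    rw [sub_pos]; exact_mod_cast (show 1 < #s by omega)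
  have key : (#s - 1) * ((∑ x ∈ s, f x) * m) ≤ (#s - 1) * ((∑ x ∈ t, f x) * #s) := by
    nlinarith [mul_le_mul_of_nonneg_right hfx (Nat.cast_nonneg m : (0 : K) ≤ m),
      mul_le_mul_of_nonneg_left hsum (Nat.cast_nonneg #s : (0 : K) ≤ #s)]
  exact le_of_mul_le_mul_left key hk

theorem Rel.card_interedges_eq_sum_left {α β : Type*} (r : α → β → Prop)
    [∀ a, DecidablePred (r a)] (s : Finset α) (t : Finset β) :
    #(Rel.interedges r s t) = ∑ a ∈ s, #{b ∈ t | r a b} := by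
  simp only [Rel.interedges, card_filter, sum_product]

theorem Rel.card_interedges_eq_sum_right {α β : Type*} (r : α → β → Prop)
    [∀ a, DecidablePred (r a)] (s : Finset α) (t : Finset β) :
    #(Rel.interedges r s t) = ∑ b ∈ t, #{a ∈ s | r a b} := by
  simp only [Rel.interedges, card_filter, sum_product_right]

theorem Rel.exists_edgeDensity_le {α β : Type*} [DecidableEq α] [DecidableEq β]
    (r : α → β → Prop) [∀ a, DecidablePred (r a)] {s : Finset α} {t : Finset β} {m : ℕ}
    (hm : 0 < m) (hs : m ≤ #s) (ht : m ≤ #t) :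
    ∃ s' ⊆ s, ∃ t' ⊆ t, #s' = m ∧ #t' = m ∧
      Rel.edgeDensity r s t ≤ Rel.edgeDensity r s' t' := by
  obtain ⟨s', hs's, hs'm, hs'⟩ :=
    exists_subset_card_eq_sum_mul_le (fun a ↦ (#{b ∈ t | r a b} : ℚ)) hs
  obtain ⟨t', ht't, ht'm, ht'⟩ :=
    exists_subset_card_eq_sum_mul_le (fun b ↦ (#{a ∈ s' | r a b} : ℚ)) ht
  refine ⟨s', hs's, t', ht't, hs'm, ht'm, ?_⟩
  simp only [← Nat.cast_sum, ← Rel.card_interedges_eq_sum_left] at hs'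
  simp only [← Nat.cast_sum, ← Rel.card_interedges_eq_sum_right r s'] at ht'
  have hs0 : (0 : ℚ) < #s := by exact_mod_cast hm.trans_le hs
  have ht0 : (0 : ℚ) < #t := by exact_mod_cast hm.trans_le ht
  have hm0 : (0 : ℚ) < m := by exact_mod_cast hm
  rw [Rel.edgeDensity, Rel.edgeDensity, hs'm, ht'm,
    div_le_div_iff₀ (by positivity) (by positivity)]
  nlinarith [mul_le_mul_of_nonneg_right hs' ht0.le, mul_le_mul_of_nonneg_right ht' hs0.le]

theorem Real.one_add_exp_le (t : ℝ) : 1 + exp t ≤ 2 * exp (t / 2 + t ^ 2 / 8) := by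
  have hsq : exp (t / 2) * exp (t / 2) = exp t := by rw [← exp_add, add_halves]
  have hinv : exp (t / 2) * exp (-(t / 2)) = 1 := by rw [← exp_add, add_neg_cancel, exp_zero]
  have hcosh : 1 + exp t = 2 * exp (t / 2) * cosh (t / 2) := by
    rw [cosh_eq]; linear_combination -hsq - hinv
  have hquad : (t / 2) ^ 2 / 2 = t ^ 2 / 8 := by ring
  rw [hcosh, exp_add, mul_assoc, ← hquad]
  gcongr
  exact cosh_le_exp_half_sq _

theorem card_lt_le_exp_mul_sum_exp {Ω : Type*} [Fintype Ω] (X : Ω → ℝ) (a : ℝ) {l : ℝ}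
    (hl : 0 ≤ l) : (#{ω | a < X ω} : ℝ) ≤ exp (-(l * a)) * ∑ ω, exp (l * X ω) := by
  rw [card_filter, mul_sum]
  push_cast
  refine sum_le_sum fun ω _ ↦ ?_
  rw [← exp_add]
  split_ifs with h
  · exact one_le_exp (by nlinarith)
  · positivity

theorem sum_exp_sum_ite {ι : Type*} [Fintype ι] [DecidableEq ι] (t : ι → ℝ) :
    ∑ ω : ι → Bool, exp (∑ i, if ω i then t i else 0) = ∏ i, (1 + exp (t i)) := by
  simp only [exp_sum]
  rw [← Fintype.prod_sum fun i (b : Bool) ↦ exp (if b then t i else 0)]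
  simp [add_comm]

theorem card_lt_sum_ite_le {ι : Type*} [Fintype ι] [DecidableEq ι] (w : ι → ℝ) (a : ℝ)
    {l : ℝ} (hl : 0 ≤ l) :
    (#{ω : ι → Bool | a < ∑ i, if ω i then w i else 0} : ℝ) ≤
      2 ^ Fintype.card ι * exp (-(l * a) + l / 2 * ∑ i, w i + l ^ 2 / 8 * ∑ i, w i ^ 2) := by
  refine (card_lt_le_exp_mul_sum_exp _ a hl).trans ?_
  simp only [mul_sum, mul_ite, mul_zero, sum_exp_sum_ite]
  calc exp (-(l * a)) * ∏ i, (1 + exp (l * w i))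
      ≤ exp (-(l * a)) * ∏ i, 2 * exp (l * w i / 2 + (l * w i) ^ 2 / 8) := by
        gcongr with i; exact one_add_exp_le _
    _ = _ := by
        rw [prod_mul_distrib, prod_const, card_univ, ← exp_sum, mul_left_comm, ← exp_add]
        have hterm (i : ι) :
            l * w i / 2 + (l * w i) ^ 2 / 8 = l / 2 * w i + l ^ 2 / 8 * w i ^ 2 := by
          ring
        simp only [hterm, add_assoc, sum_add_distrib]

theorem card_filter_comp_eq_sum_ite {β ι : Type*} [Fintype ι] [DecidableEq ι] (A : Finset β)
    (f : β → ι) (ω : ι → Bool) :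
    (#{p ∈ A | ω (f p)} : ℝ) = ∑ i, if ω i then (#{p ∈ A | f p = i} : ℝ) else 0 := by
  rw [card_filter, Nat.cast_sum]
  simp only [Nat.cast_ite, Nat.cast_one, Nat.cast_zero]
  rw [← sum_fiberwise' A f fun i ↦ if ω i then (1 : ℝ) else 0]
  refine sum_congr rfl fun i _ ↦ ?_
  split_ifs <;> simp

theorem card_filter_sym2_mk_eq_le_two {V : Type*} [DecidableEq V] (A : Finset (V × V))
    (e : Sym2 V) : #{p ∈ A | s(p.1, p.2) = e} ≤ 2 := by
  induction e using Sym2.ind with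
  | _ a b =>
    calc #{p ∈ A | s(p.1, p.2) = s(a, b)} ≤ #({(a, b), (b, a)} : Finset (V × V)) := by
          refine card_le_card fun p hp ↦ ?_
          rw [mem_filter, Sym2.eq_iff] at hp
          rcases hp.2 with ⟨rfl, rfl⟩ | ⟨rfl, rfl⟩ <;> simp
      _ ≤ 2 := card_le_two

section RandomGraph

variable {V : Type*} [Fintype V] [DecidableEq V]

theorem card_interedges_fromEdgeSet_eq_sum (ω : Sym2 V → Bool) (S T : Finset V) :
    (#((SimpleGraph.fromEdgeSet {e | ω e}).interedges S T) : ℝ) =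
      ∑ e, if ω e then (#{p ∈ S ×ˢ T | p.1 ≠ p.2 ∧ s(p.1, p.2) = e} : ℝ) else 0 := by
  have hinter : (SimpleGraph.fromEdgeSet {e | ω e}).interedges S T =
      {p ∈ {p ∈ S ×ˢ T | p.1 ≠ p.2} | ω s(p.1, p.2)} := by
    ext p
    simp only [SimpleGraph.interedges_def, mem_filter, SimpleGraph.fromEdgeSet_adj,
      Set.mem_ofPred_eq]
    tauto
  rw [hinter, card_filter_comp_eq_sum_ite]
  simp only [filter_filter]

theorem card_edgeDensity_gt_le (S T : Finset V) {ε : ℝ} (hε : 0 ≤ ε) :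
    (#{ω : Sym2 V → Bool |
        (1 + ε) / 2 < ((SimpleGraph.fromEdgeSet {e | ω e}).edgeDensity S T : ℝ)} : ℝ) ≤
      2 ^ Fintype.card (Sym2 V) * exp (-(ε ^ 2 * (#S * #T) / 4)) := by
  set k : ℝ := #S * #T
  set w : Sym2 V → ℝ := fun e ↦ #{p ∈ S ×ˢ T | p.1 ≠ p.2 ∧ s(p.1, p.2) = e}
  have hw0 (e : Sym2 V) : 0 ≤ w e := Nat.cast_nonneg _
  have hw2 (e : Sym2 V) : w e ≤ 2 := by
    simp only [w, ← filter_filter]; exact_mod_cast card_filter_sym2_mk_eq_le_two _ e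
  have hsum : ∑ e, w e ≤ k := by
    simp only [w, k, ← filter_filter, ← Nat.cast_sum, ← card_eq_sum_card_fiberwise
      fun _ _ ↦ mem_univ _, ← card_product, ← Nat.cast_mul]
    exact_mod_cast card_filter_le _ _
  have hsq : ∑ e, w e ^ 2 ≤ 2 * ∑ e, w e := by
    rw [mul_sum]; exact sum_le_sum fun e _ ↦ by nlinarith [hw0 e, hw2 e]
  have hdense (ω : Sym2 V → Bool)
      (hω : (1 + ε) / 2 < ((SimpleGraph.fromEdgeSet {e | ω e}).edgeDensity S T : ℝ)) :
      (1 + ε) / 2 * k < ∑ e, if ω e then w e else 0 := by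
    rw [SimpleGraph.edgeDensity_def] at hω
    push_cast at hω
    have hk : 0 < k := by
      rcases div_pos_iff.mp ((by positivity : 0 < (1 + ε) / 2).trans hω) with h | h
      · exact h.2
      · exact absurd h.1 (Nat.cast_nonneg _).not_gt
    rw [← card_interedges_fromEdgeSet_eq_sum, ← lt_div_iff₀ hk]
    exact hω
  calc _ ≤ (#{ω : Sym2 V → Bool | (1 + ε) / 2 * k < ∑ e, if ω e then w e else 0} : ℝ) :=
        by exact_mod_cast card_le_card (monotone_filter_right _ fun ω _ ↦ hdense ω)
    _ ≤ _ := card_lt_sum_ite_le w _ hε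
    -- the exponent is at most `-ε (1 + ε) k / 2 + ε k / 2 + ε² k / 4 = -ε² k / 4`
    _ ≤ _ := by gcongr; nlinarith

theorem card_exists_edgeDensity_gt_le {m : ℕ} (hm : 0 < m) {ε : ℝ} (hε : 0 ≤ ε) :
    (#{ω : Sym2 V → Bool | ∃ S T : Finset V, m ≤ #S ∧ m ≤ #T ∧
        (1 + ε) / 2 < ((SimpleGraph.fromEdgeSet {e | ω e}).edgeDensity S T : ℝ)} : ℝ) ≤
      (Fintype.card V ^ m) ^ 2 * 2 ^ Fintype.card (Sym2 V) * exp (-(ε ^ 2 * m ^ 2 / 4)) := by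
  set I := powersetCard m (univ : Finset V) ×ˢ powersetCard m (univ : Finset V)
  set E : Finset V × Finset V → Finset (Sym2 V → Bool) := fun q ↦ {ω : Sym2 V → Bool |
    (1 + ε) / 2 < ((SimpleGraph.fromEdgeSet {e | ω e}).edgeDensity q.1 q.2 : ℝ)}
  have hI : (#I : ℝ) ≤ (Fintype.card V ^ m) ^ 2 := by
    simp only [I, card_product, card_powersetCard, card_univ, sq]
    exact_mod_cast Nat.mul_le_mul (Nat.choose_le_pow _ _) (Nat.choose_le_pow _ _)
  have hE : ∀ q ∈ I,
      (#(E q) : ℝ) ≤ 2 ^ Fintype.card (Sym2 V) * exp (-(ε ^ 2 * m ^ 2 / 4)) := by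
    intro q hq
    simp only [I, mem_product, mem_powersetCard] at hq
    simpa only [hq.1.2, hq.2.2, ← sq] using card_edgeDensity_gt_le q.1 q.2 hε
  calc _ ≤ (#(I.biUnion E) : ℝ) := by
        gcongr
        intro ω hω
        obtain ⟨S, T, hS, hT, hST⟩ := (mem_filter.mp hω).2
        obtain ⟨S', -, T', -, hS', hT', hle⟩ :=
          Rel.exists_edgeDensity_le (SimpleGraph.fromEdgeSet {e | ω e}).Adj hm hS hT
        refine mem_biUnion.mpr ⟨(S', T'), ?_, mem_filter.mpr ⟨mem_univ _, ?_⟩⟩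
        · simp [I, mem_powersetCard, hS', hT']
        · exact hST.trans_le (by exact_mod_cast hle)
    _ ≤ ∑ q ∈ I, (#(E q) : ℝ) := by exact_mod_cast card_biUnion_le
    _ ≤ #I * (2 ^ Fintype.card (Sym2 V) * exp (-(ε ^ 2 * m ^ 2 / 4))) := by
        simpa using sum_le_sum hE
    _ ≤ _ := by rw [mul_assoc]; gcongr

theorem natCard_adj_pairs_div_eq_edgeDensity (ω : Sym2 V → Bool) (S T : Finset V) :
    (Nat.card {p : V × V //
        p.1 ∈ S ∧ p.2 ∈ T ∧ p.1 ≠ p.2 ∧ ω s(p.1, p.2) = true} : ℝ) / (#S * #T) =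
      ((SimpleGraph.fromEdgeSet {e | ω e}).edgeDensity S T : ℝ) := by
  rw [SimpleGraph.edgeDensity_def, Nat.card_eq_fintype_card, Fintype.card_subtype]
  push_cast
  congr 3
  ext p
  simp only [mem_filter, mem_univ, true_and, SimpleGraph.interedges_def, mem_product,
    SimpleGraph.fromEdgeSet_adj, Set.mem_ofPred_eq]
  tauto

end RandomGraph

theorem pow_sq_mul_pow_mul_exp_le_one {x c ε : ℝ} (hx : 1 < x) (hc : 20 ≤ ε ^ 2 * c) {m : ℕ}
    (hm : c * log x ≤ m) : (x ^ m) ^ 2 * x ^ 3 * exp (-(ε ^ 2 * m ^ 2 / 4)) ≤ 1 := by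
  have hL : 0 < log x := log_pos hx
  have hc0 : 0 < c := by nlinarith [sq_nonneg ε]
  have hm1 : (1 : ℝ) ≤ m := by
    have hm0 : (0 : ℝ) < m := (mul_pos hc0 hL).trans_le hm
    exact_mod_cast Nat.one_le_iff_ne_zero.mpr (by rintro rfl; simp at hm0)
  have hεm : 20 * log x ≤ ε ^ 2 * m := by
    nlinarith [mul_le_mul_of_nonneg_left hm (sq_nonneg ε)]
  have hpow : (x ^ m) ^ 2 * x ^ 3 = exp ((2 * m + 3) * log x) := by
    rw [← pow_mul, ← pow_add, ← exp_log (by positivity : 0 < x ^ (m * 2 + 3)), log_pow]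
    push_cast; ring_nf
  rw [hpow, ← exp_add, exp_le_one_iff]
  nlinarith [mul_le_mul_of_nonneg_right hεm (by positivity : (0 : ℝ) ≤ m)]

/-- Bi-density bound for Erdős–Rényi graphs `G(n, 1/2)`: for `ε > 0` and
`c ≥ 24·2.1·max{1, (1+ε)/ε²}`, the probability (over a uniformly random
symmetric edge-indicator `ω`, i.e. each potential edge present independently
with probability `1/2`) that there are vertex sets `S, T` with
`|S|, |T| ≥ c·log n` and `bi-density(S,T) > (1+ε)/2` is at most `2/n³`. -/
theorem bidensity_bound (n : ℕ) (hn : 2 ≤ n) (ε cst : ℝ) (hε : 0 < ε)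
    (hcst : 24 * 2.1 * max 1 ((1 + ε) / ε ^ 2) ≤ cst) :
    (Nat.card {ω : Sym2 (Fin n) → Bool //
        ∃ S T : Finset (Fin n),
          cst * Real.log n ≤ (S.card : ℝ) ∧ cst * Real.log n ≤ (T.card : ℝ) ∧
          (1 + ε) / 2 <
            (Nat.card {p : Fin n × Fin n //
                p.1 ∈ S ∧ p.2 ∈ T ∧ p.1 ≠ p.2 ∧ ω s(p.1, p.2) = true} : ℝ) /
              ((S.card : ℝ) * (T.card : ℝ))} : ℝ) /
      (Nat.card (Sym2 (Fin n) → Bool) : ℝ) ≤ 2 / (n : ℝ) ^ 3 := by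
  have hn1 : (1 : ℝ) < n := by exact_mod_cast hn
  have hc : 20 ≤ ε ^ 2 * cst := by
    have h : 24 * 2.1 * ((1 + ε) / ε ^ 2) ≤ cst :=
      le_trans (mul_le_mul_of_nonneg_left (le_max_right _ _) (by norm_num)) hcst
    rw [mul_div_assoc', div_le_iff₀ (by positivity)] at h
    nlinarith
  set m := ⌈cst * log n⌉₊
  have hm : 0 < m := Nat.ceil_pos.mpr (by nlinarith [log_pos hn1, sq_nonneg ε])
  simp only [natCard_adj_pairs_div_eq_edgeDensity, ← Nat.ceil_le]
  rw [Nat.card_eq_fintype_card, Fintype.card_subtype, Nat.card_eq_fintype_card, Fintype.card_fun,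
    Fintype.card_bool, div_le_div_iff₀ (by positivity) (by positivity)]
  push_cast
  set M := Fintype.card (Sym2 (Fin n))
  calc _ ≤ (n ^ m) ^ 2 * 2 ^ M * exp (-(ε ^ 2 * m ^ 2 / 4)) * n ^ 3 := by
        gcongr
        simpa only [Fintype.card_fin] using card_exists_edgeDensity_gt_le (V := Fin n) hm hε.le
    _ = 2 ^ M * ((n ^ m) ^ 2 * n ^ 3 * exp (-(ε ^ 2 * m ^ 2 / 4))) := by ring
    _ ≤ 2 ^ M * 1 := by gcongr; exact pow_sq_mul_pow_mul_exp_le_one hn1 hc (Nat.le_ceil _)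
    _ ≤ 2 * 2 ^ M := by linarith [pow_pos (two_pos : (0 : ℝ) < 2) M]
end
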